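/- arXiv:1803.05653 — 9 statements merged into one kernel-verified Lean document; each statement's English description precedes it below -/
import Mathlib

section
/- Let d₁, d₂ ≥ 1 and p₁, p₂ ≥ 0, and let f : ℝ^{d₁} × ℝ^{d₂} → ℝ be continuous and positively homogeneous of degree p₁ in the first argument and of degree p₂ in the second argument. Then there exist a function θ : (0,∞) → [0,∞) with θ(ε) → 0 as ε → 0⁺ and, for every ε > 0, a constant K_ε ≥ 0, such that for all x₁, y₁ ∈ ℝ^{d₁} and x₂, y₂ ∈ ℝ^{d₂}: |f(x₁+y₁, x₂+y₂) − f(x₁, x₂)| ≤ θ(ε) ‖x₁‖^{p₁} ‖x₂‖^{p₂} + K_ε ( ‖y₁‖^{p₁} (‖x₂‖^{p₂} + ‖y₂‖^{p₂}) + ‖y₂‖^{p₂} (‖x₁‖^{p₁} + ‖y₁‖^{p₁}) ). -/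
/-!
Write `m = min ε 1`. If `‖yᵢ‖ ≤ m ‖xᵢ‖` for `i = 1, 2`, bihomogeneity rescales `xᵢ` into the unit
ball and `yᵢ` into the ball of radius `m`; the increment of `f` is then `‖x₁‖^p₁ ‖x₂‖^p₂` times an
increment of `f` between two points of the ball of radius `2` at distance at most `ε`, so it is
bounded by the modulus of continuity `θ ε` of `f` on that compact ball, which tends to `0`.
Otherwise `‖xᵢ‖ < ‖yᵢ‖ / m` for some `i`, and the bound `|f (a, b)| ≤ M ‖a‖^p₁ ‖b‖^p₂`
(`M` a bound for `|f|` on the unit ball) estimates both values of `f` by the `K_ε` term.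
-/

open Metric Filter Set Topology

lemma Real.add_rpow_le_two_rpow_mul {a b p : ℝ} (ha : 0 ≤ a) (hb : 0 ≤ b) (hp : 0 ≤ p) :
    (a + b) ^ p ≤ 2 ^ p * (a ^ p + b ^ p) := calc
  (a + b) ^ p ≤ (2 * max a b) ^ p := by rw [two_mul]; gcongr <;> simp
  _ = 2 ^ p * max a b ^ p := Real.mul_rpow zero_le_two (le_max_of_le_left ha)
  _ = 2 ^ p * max (a ^ p) (b ^ p) := by rw [Real.rpow_max ha hb hp]
  _ ≤ 2 ^ p * (a ^ p + b ^ p) := by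
    gcongr; exact max_le_add_of_nonneg (by positivity) (by positivity)

lemma Real.rpow_le_inv_rpow_mul_rpow {a b m p : ℝ} (ha : 0 ≤ a) (hm : 0 < m) (hp : 0 ≤ p)
    (h : m * a ≤ b) : a ^ p ≤ m⁻¹ ^ p * b ^ p := calc
  a ^ p ≤ (m⁻¹ * b) ^ p := by
    gcongr; rwa [le_inv_mul_iff₀ hm]
  _ = m⁻¹ ^ p * b ^ p := Real.mul_rpow (by positivity) ((mul_nonneg hm.le ha).trans h)

lemma Real.rpow_mul_rpow_le_of_mul_le_or {a₁ a₂ b₁ b₂ m p₁ p₂ : ℝ} (ha₁ : 0 ≤ a₁) (ha₂ : 0 ≤ a₂)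
    (hb₁ : 0 ≤ b₁) (hb₂ : 0 ≤ b₂) (hm : 0 < m) (hp₁ : 0 ≤ p₁) (hp₂ : 0 ≤ p₂)
    (h : m * a₁ ≤ b₁ ∨ m * a₂ ≤ b₂) :
    a₁ ^ p₁ * a₂ ^ p₂ ≤
      (m⁻¹ ^ p₁ + m⁻¹ ^ p₂) * (b₁ ^ p₁ * (a₂ ^ p₂ + b₂ ^ p₂) + b₂ ^ p₂ * (a₁ ^ p₁ + b₁ ^ p₁)) := by
  have hA₁ : 0 ≤ a₁ ^ p₁ := by positivity
  have hA₂ : 0 ≤ a₂ ^ p₂ := by positivity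
  have hB₁ : 0 ≤ b₁ ^ p₁ := by positivity
  have hB₂ : 0 ≤ b₂ ^ p₂ := by positivity
  rcases h with h | h
  · calc a₁ ^ p₁ * a₂ ^ p₂ ≤ m⁻¹ ^ p₁ * b₁ ^ p₁ * a₂ ^ p₂ := by
          gcongr; exact Real.rpow_le_inv_rpow_mul_rpow ha₁ hm hp₁ h
      _ ≤ (m⁻¹ ^ p₁ + m⁻¹ ^ p₂) *
          (b₁ ^ p₁ * (a₂ ^ p₂ + b₂ ^ p₂) + b₂ ^ p₂ * (a₁ ^ p₁ + b₁ ^ p₁)) := by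
        rw [mul_assoc]
        gcongr
        · exact le_add_of_nonneg_right (by positivity)
        · nlinarith [mul_nonneg hB₁ hB₂, mul_nonneg hB₂ (add_nonneg hA₁ hB₁)]
  · calc a₁ ^ p₁ * a₂ ^ p₂ ≤ m⁻¹ ^ p₂ * (a₁ ^ p₁ * b₂ ^ p₂) := by
          rw [mul_left_comm]
          gcongr; exact Real.rpow_le_inv_rpow_mul_rpow ha₂ hm hp₂ h
      _ ≤ (m⁻¹ ^ p₁ + m⁻¹ ^ p₂) *
          (b₁ ^ p₁ * (a₂ ^ p₂ + b₂ ^ p₂) + b₂ ^ p₂ * (a₁ ^ p₁ + b₁ ^ p₁)) := by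
        gcongr
        · exact le_add_of_nonneg_left (by positivity)
        · nlinarith [mul_nonneg hB₁ hB₂, mul_nonneg hB₁ (add_nonneg hA₂ hB₂)]

lemma add_mul_add_add_mul_le {X₁ X₂ Y₁ Y₂ C R : ℝ} (hX₁ : 0 ≤ X₁) (hX₂ : 0 ≤ X₂) (hY₁ : 0 ≤ Y₁)
    (hY₂ : 0 ≤ Y₂) (hC : 0 ≤ C)
    (h : X₁ * X₂ ≤ R * (Y₁ * (X₂ + Y₂) + Y₂ * (X₁ + Y₁))) :
    C * ((X₁ + Y₁) * (X₂ + Y₂)) + X₁ * X₂ ≤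
      (C + 1) * (R + 1) * (Y₁ * (X₂ + Y₂) + Y₂ * (X₁ + Y₁)) := by
  have hT : 0 ≤ Y₁ * (X₂ + Y₂) + Y₂ * (X₁ + Y₁) := by positivity
  have hprod : (X₁ + Y₁) * (X₂ + Y₂) ≤ X₁ * X₂ + (Y₁ * (X₂ + Y₂) + Y₂ * (X₁ + Y₁)) := by
    nlinarith [mul_nonneg hY₁ hY₂]
  nlinarith [mul_le_mul_of_nonneg_left hprod hC, mul_le_mul_of_nonneg_left h hC,
    hT, mul_nonneg hC hT]

section Modulus

variable {α β : Type*} [PseudoMetricSpace α] [PseudoMetricSpace β]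

noncomputable def modulusOn (f : α → β) (s : Set α) (ε : ℝ) : ℝ :=
  sSup ((fun p : α × α => dist (f p.1) (f p.2)) '' {p ∈ s ×ˢ s | dist p.1 p.2 ≤ ε})

lemma modulusOn_nonneg (f : α → β) (s : Set α) (ε : ℝ) : 0 ≤ modulusOn f s ε :=
  Real.sSup_nonneg (by rintro _ ⟨p, -, rfl⟩; exact dist_nonneg)

lemma dist_le_modulusOn {f : α → β} {s : Set α} (hs : IsCompact s) (hf : ContinuousOn f s)
    {ε : ℝ} {x y : α} (hx : x ∈ s) (hy : y ∈ s) (hxy : dist x y ≤ ε) :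
    dist (f x) (f y) ≤ modulusOn f s ε := by
  have hbdd : BddAbove ((fun p : α × α => dist (f p.1) (f p.2)) '' s ×ˢ s) :=
    (hs.prod hs).bddAbove_image (continuous_dist.comp_continuousOn (hf.prodMap hf))
  exact le_csSup (hbdd.mono (image_mono (sep_subset _ _))) ⟨(x, y), ⟨⟨hx, hy⟩, hxy⟩, rfl⟩

lemma tendsto_modulusOn {f : α → β} {s : Set α} (hs : IsCompact s) (hf : ContinuousOn f s) :
    Tendsto (modulusOn f s) (𝓝[>] 0) (𝓝 0) := by
  refine tendsto_order.2 ⟨fun a ha => .of_forall fun ε => ha.trans_le (modulusOn_nonneg f s ε),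
    fun η hη => ?_⟩
  obtain ⟨δ, hδ, hfδ⟩ :=
    Metric.uniformContinuousOn_iff_le.1 (hs.uniformContinuousOn_of_continuous hf) (η / 2)
      (half_pos hη)
  filter_upwards [Ioc_mem_nhdsGT hδ] with ε hε
  refine (Real.sSup_le ?_ (half_pos hη).le).trans_lt (half_lt_self hη)
  rintro _ ⟨p, ⟨⟨hp₁, hp₂⟩, hp⟩, rfl⟩
  exact hfδ _ hp₁ _ hp₂ (hp.trans hε.2)

end Modulus

lemma abs_sub_le_of_abs_le_mul_rpow {E₁ E₂ : Type*} [SeminormedAddCommGroup E₁]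
    [SeminormedAddCommGroup E₂] {g : E₁ × E₂ → ℝ} {p₁ p₂ M m : ℝ} (hp₁ : 0 ≤ p₁)
    (hp₂ : 0 ≤ p₂) (hM₀ : 0 ≤ M) (hM : ∀ a b, |g (a, b)| ≤ M * ‖a‖ ^ p₁ * ‖b‖ ^ p₂) (hm : 0 < m)
    {x₁ y₁ : E₁} {x₂ y₂ : E₂} (h : m * ‖x₁‖ ≤ ‖y₁‖ ∨ m * ‖x₂‖ ≤ ‖y₂‖) :
    |g (x₁ + y₁, x₂ + y₂) - g (x₁, x₂)| ≤
      M * (2 ^ p₁ * 2 ^ p₂ + 1) * (m⁻¹ ^ p₁ + m⁻¹ ^ p₂ + 1) *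
        (‖y₁‖ ^ p₁ * (‖x₂‖ ^ p₂ + ‖y₂‖ ^ p₂) + ‖y₂‖ ^ p₂ * (‖x₁‖ ^ p₁ + ‖y₁‖ ^ p₁)) := by
  have hcross := Real.rpow_mul_rpow_le_of_mul_le_or (norm_nonneg x₁) (norm_nonneg x₂)
    (norm_nonneg y₁) (norm_nonneg y₂) hm hp₁ hp₂ h
  have hsum : |g (x₁ + y₁, x₂ + y₂)| ≤
      M * (2 ^ p₁ * 2 ^ p₂ * ((‖x₁‖ ^ p₁ + ‖y₁‖ ^ p₁) * (‖x₂‖ ^ p₂ + ‖y₂‖ ^ p₂))) := calc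
    |g (x₁ + y₁, x₂ + y₂)| ≤ M * ‖x₁ + y₁‖ ^ p₁ * ‖x₂ + y₂‖ ^ p₂ := hM _ _
    _ ≤ M * (‖x₁‖ + ‖y₁‖) ^ p₁ * (‖x₂‖ + ‖y₂‖) ^ p₂ := by gcongr <;> exact norm_add_le _ _
    _ ≤ M * (2 ^ p₁ * (‖x₁‖ ^ p₁ + ‖y₁‖ ^ p₁)) * (2 ^ p₂ * (‖x₂‖ ^ p₂ + ‖y₂‖ ^ p₂)) := by
      gcongr
      · exact Real.add_rpow_le_two_rpow_mul (norm_nonneg _) (norm_nonneg _) hp₁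
      · exact Real.add_rpow_le_two_rpow_mul (norm_nonneg _) (norm_nonneg _) hp₂
    _ = M * (2 ^ p₁ * 2 ^ p₂ * ((‖x₁‖ ^ p₁ + ‖y₁‖ ^ p₁) * (‖x₂‖ ^ p₂ + ‖y₂‖ ^ p₂))) := by ring
  calc |g (x₁ + y₁, x₂ + y₂) - g (x₁, x₂)| ≤ |g (x₁ + y₁, x₂ + y₂)| + |g (x₁, x₂)| := abs_sub _ _
    _ ≤ M * (2 ^ p₁ * 2 ^ p₂ * ((‖x₁‖ ^ p₁ + ‖y₁‖ ^ p₁) * (‖x₂‖ ^ p₂ + ‖y₂‖ ^ p₂)) +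
          ‖x₁‖ ^ p₁ * ‖x₂‖ ^ p₂) := by
      rw [mul_add]; exact add_le_add hsum ((hM _ _).trans_eq (mul_assoc _ _ _))
    _ ≤ M * ((2 ^ p₁ * 2 ^ p₂ + 1) * (m⁻¹ ^ p₁ + m⁻¹ ^ p₂ + 1) *
          (‖y₁‖ ^ p₁ * (‖x₂‖ ^ p₂ + ‖y₂‖ ^ p₂) + ‖y₂‖ ^ p₂ * (‖x₁‖ ^ p₁ + ‖y₁‖ ^ p₁))) := by
      gcongr
      exact add_mul_add_add_mul_le (by positivity) (by positivity) (by positivity) (by positivity)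
        (by positivity) hcross
    _ = _ := by ring

lemma exists_smul_eq_of_norm_le_mul {E : Type*} [NormedAddCommGroup E] [NormedSpace ℝ E]
    {x y : E} {c : ℝ} (hc : 0 ≤ c) (h : ‖y‖ ≤ c * ‖x‖) :
    ∃ u v : E, ‖u‖ ≤ 1 ∧ ‖v‖ ≤ c ∧ ‖x‖ • u = x ∧ ‖x‖ • v = y := by
  rcases eq_or_ne x 0 with rfl | hx
  · refine ⟨0, 0, by simp, by simpa using hc, by simp, ?_⟩
    simpa [eq_comm] using h
  · have hx' : 0 < ‖x‖ := norm_pos_iff.2 hx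
    refine ⟨‖x‖⁻¹ • x, ‖x‖⁻¹ • y, (norm_smul_inv_norm hx).le, ?_,
      smul_inv_smul₀ hx'.ne' x, smul_inv_smul₀ hx'.ne' y⟩
    rw [norm_smul, norm_inv, norm_norm, inv_mul_le_iff₀ hx', mul_comm]
    exact h

section Bihomogeneous

variable {E₁ E₂ : Type*} [NormedAddCommGroup E₁] [NormedSpace ℝ E₁]
  [NormedAddCommGroup E₂] [NormedSpace ℝ E₂]

structure IsBihomogeneous (f : E₁ × E₂ → ℝ) (p₁ p₂ : ℝ) : Prop where
  smul_left : ∀ l : ℝ, 0 ≤ l → ∀ x₁ x₂, f (l • x₁, x₂) = l ^ p₁ * f (x₁, x₂)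
  smul_right : ∀ l : ℝ, 0 ≤ l → ∀ x₁ x₂, f (x₁, l • x₂) = l ^ p₂ * f (x₁, x₂)

namespace IsBihomogeneous

variable {f : E₁ × E₂ → ℝ} {p₁ p₂ : ℝ}

lemma map_smul_smul (hf : IsBihomogeneous f p₁ p₂) {r₁ r₂ : ℝ} (h₁ : 0 ≤ r₁) (h₂ : 0 ≤ r₂)
    (a : E₁) (b : E₂) : f (r₁ • a, r₂ • b) = r₁ ^ p₁ * r₂ ^ p₂ * f (a, b) := by
  rw [hf.smul_left r₁ h₁, hf.smul_right r₂ h₂, mul_assoc]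

lemma exists_bound [ProperSpace E₁] [ProperSpace E₂] (hf : IsBihomogeneous f p₁ p₂)
    (hc : Continuous f) : ∃ M, 0 ≤ M ∧ ∀ a b, |f (a, b)| ≤ M * ‖a‖ ^ p₁ * ‖b‖ ^ p₂ := by
  obtain ⟨M, hM⟩ :=
    (isCompact_closedBall (0 : E₁ × E₂) 1).exists_bound_of_continuousOn hc.continuousOn
  refine ⟨M, (norm_nonneg _).trans (hM 0 (mem_closedBall_self zero_le_one)), fun a b => ?_⟩
  obtain ⟨u, -, hu, -, ha, -⟩ := exists_smul_eq_of_norm_le_mul zero_le_one (one_mul ‖a‖).ge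
  obtain ⟨v, -, hv, -, hb, -⟩ := exists_smul_eq_of_norm_le_mul zero_le_one (one_mul ‖b‖).ge
  have huv : |f (u, v)| ≤ M := hM (u, v) (mem_closedBall_zero_iff.2 (max_le hu hv))
  calc |f (a, b)| = ‖a‖ ^ p₁ * ‖b‖ ^ p₂ * |f (u, v)| := by
        conv_lhs => rw [← ha, ← hb]
        rw [hf.map_smul_smul (norm_nonneg a) (norm_nonneg b), abs_mul,
          abs_of_nonneg (by positivity)]
    _ ≤ ‖a‖ ^ p₁ * ‖b‖ ^ p₂ * M := by gcongr
    _ = M * ‖a‖ ^ p₁ * ‖b‖ ^ p₂ := by ring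

lemma abs_sub_le_modulusOn_mul [ProperSpace E₁] [ProperSpace E₂]
    (hf : IsBihomogeneous f p₁ p₂) (hc : Continuous f) {m ε : ℝ} (hm₀ : 0 ≤ m) (hm₁ : m ≤ 1)
    (hmε : m ≤ ε) {x₁ y₁ : E₁} {x₂ y₂ : E₂} (h₁ : ‖y₁‖ ≤ m * ‖x₁‖) (h₂ : ‖y₂‖ ≤ m * ‖x₂‖) :
    |f (x₁ + y₁, x₂ + y₂) - f (x₁, x₂)| ≤
      modulusOn f (closedBall 0 2) ε * ‖x₁‖ ^ p₁ * ‖x₂‖ ^ p₂ := by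
  obtain ⟨u₁, v₁, hu₁, hv₁, hx₁, hy₁⟩ := exists_smul_eq_of_norm_le_mul hm₀ h₁
  obtain ⟨u₂, v₂, hu₂, hv₂, hx₂, hy₂⟩ := exists_smul_eq_of_norm_le_mul hm₀ h₂
  have hmem : (u₁ + v₁, u₂ + v₂) ∈ closedBall (0 : E₁ × E₂) 2 := by
    rw [mem_closedBall_zero_iff, Prod.norm_mk]
    exact max_le ((norm_add_le _ _).trans (by linarith)) ((norm_add_le _ _).trans (by linarith))
  have hmem' : (u₁, u₂) ∈ closedBall (0 : E₁ × E₂) 2 := by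
    rw [mem_closedBall_zero_iff, Prod.norm_mk]
    exact max_le (by linarith) (by linarith)
  have hdist : dist (u₁ + v₁, u₂ + v₂) (u₁, u₂) ≤ ε := by
    rw [Prod.dist_eq, dist_self_add_left, dist_self_add_left]
    exact max_le (by linarith) (by linarith)
  calc |f (x₁ + y₁, x₂ + y₂) - f (x₁, x₂)|
      = |f (‖x₁‖ • (u₁ + v₁), ‖x₂‖ • (u₂ + v₂)) - f (‖x₁‖ • u₁, ‖x₂‖ • u₂)| := by
        rw [smul_add, smul_add, hx₁, hy₁, hx₂, hy₂]
    _ = ‖x₁‖ ^ p₁ * ‖x₂‖ ^ p₂ * dist (f (u₁ + v₁, u₂ + v₂)) (f (u₁, u₂)) := by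
        rw [hf.map_smul_smul (norm_nonneg _) (norm_nonneg _),
          hf.map_smul_smul (norm_nonneg _) (norm_nonneg _), ← mul_sub, abs_mul,
          abs_of_nonneg (by positivity), Real.dist_eq]
    _ ≤ ‖x₁‖ ^ p₁ * ‖x₂‖ ^ p₂ * modulusOn f (closedBall 0 2) ε := by
        gcongr
        exact dist_le_modulusOn (isCompact_closedBall _ _) hc.continuousOn hmem hmem' hdist
    _ = modulusOn f (closedBall 0 2) ε * ‖x₁‖ ^ p₁ * ‖x₂‖ ^ p₂ := by ring

end IsBihomogeneous

end Bihomogeneous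

theorem stmt_1_general (d₁ d₂ : ℕ) (p₁ p₂ : ℝ)
    (hp₁ : 0 ≤ p₁) (hp₂ : 0 ≤ p₂)
    (f : EuclideanSpace ℝ (Fin d₁) × EuclideanSpace ℝ (Fin d₂) → ℝ)
    (hf : Continuous f)
    (hhom₁ : ∀ l : ℝ, 0 ≤ l → ∀ x₁ x₂, f (l • x₁, x₂) = l ^ p₁ * f (x₁, x₂))
    (hhom₂ : ∀ l : ℝ, 0 ≤ l → ∀ x₁ x₂, f (x₁, l • x₂) = l ^ p₂ * f (x₁, x₂)) :
    ∃ θ : ℝ → ℝ, (∀ ε : ℝ, 0 < ε → 0 ≤ θ ε) ∧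
      Filter.Tendsto θ (nhdsWithin 0 (Set.Ioi 0)) (nhds 0) ∧
      ∀ ε : ℝ, 0 < ε → ∃ K : ℝ, 0 ≤ K ∧
        ∀ (x₁ y₁ : EuclideanSpace ℝ (Fin d₁)) (x₂ y₂ : EuclideanSpace ℝ (Fin d₂)),
          |f (x₁ + y₁, x₂ + y₂) - f (x₁, x₂)| ≤
            θ ε * ‖x₁‖ ^ p₁ * ‖x₂‖ ^ p₂ +
              K * (‖y₁‖ ^ p₁ * (‖x₂‖ ^ p₂ + ‖y₂‖ ^ p₂) +
                ‖y₂‖ ^ p₂ * (‖x₁‖ ^ p₁ + ‖y₁‖ ^ p₁)) := by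
  have hbihom : IsBihomogeneous f p₁ p₂ := ⟨hhom₁, hhom₂⟩
  obtain ⟨M, hM₀, hM⟩ := hbihom.exists_bound hf
  refine ⟨modulusOn f (closedBall 0 2), fun ε _ => modulusOn_nonneg _ _ ε,
    tendsto_modulusOn (isCompact_closedBall _ _) hf.continuousOn, fun ε hε => ?_⟩
  set m := min ε 1
  have hm : 0 < m := lt_min hε one_pos
  refine ⟨M * (2 ^ p₁ * 2 ^ p₂ + 1) * (m⁻¹ ^ p₁ + m⁻¹ ^ p₂ + 1), by positivity,
    fun x₁ y₁ x₂ y₂ => ?_⟩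
  have hθ₀ := modulusOn_nonneg f (closedBall 0 2) ε
  by_cases h : ‖y₁‖ ≤ m * ‖x₁‖ ∧ ‖y₂‖ ≤ m * ‖x₂‖
  · exact (hbihom.abs_sub_le_modulusOn_mul hf hm.le (min_le_right _ _) (min_le_left _ _) h.1
      h.2).trans (le_add_of_nonneg_right (by positivity))
  · rw [not_and_or, not_le, not_le] at h
    exact (abs_sub_le_of_abs_le_mul_rpow hp₁ hp₂ hM₀ hM hm (h.imp le_of_lt le_of_lt)).trans
      (le_add_of_nonneg_left (by positivity))

/-- For `f : ℝ^{d₁} × ℝ^{d₂} → ℝ` continuous and positively homogeneous of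
degree `p₁` in the first and `p₂` in the second argument, there is `θ : (0,∞) → [0,∞)` with
`θ(ε) → 0` as `ε → 0⁺` and for every `ε > 0` a constant `K_ε ≥ 0` such that
`|f(x₁+y₁,x₂+y₂) − f(x₁,x₂)| ≤ θ(ε)‖x₁‖^{p₁}‖x₂‖^{p₂}
  + K_ε(‖y₁‖^{p₁}(‖x₂‖^{p₂}+‖y₂‖^{p₂}) + ‖y₂‖^{p₂}(‖x₁‖^{p₁}+‖y₁‖^{p₁}))`. -/
theorem stmt_1 (d₁ d₂ : ℕ) (hd₁ : 1 ≤ d₁) (hd₂ : 1 ≤ d₂) (p₁ p₂ : ℝ)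
    (hp₁ : 0 ≤ p₁) (hp₂ : 0 ≤ p₂)
    (f : EuclideanSpace ℝ (Fin d₁) × EuclideanSpace ℝ (Fin d₂) → ℝ)
    (hf : Continuous f)
    (hhom₁ : ∀ l : ℝ, 0 ≤ l → ∀ x₁ x₂, f (l • x₁, x₂) = l ^ p₁ * f (x₁, x₂))
    (hhom₂ : ∀ l : ℝ, 0 ≤ l → ∀ x₁ x₂, f (x₁, l • x₂) = l ^ p₂ * f (x₁, x₂)) :
    ∃ θ : ℝ → ℝ, (∀ ε : ℝ, 0 < ε → 0 ≤ θ ε) ∧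
      Filter.Tendsto θ (nhdsWithin 0 (Set.Ioi 0)) (nhds 0) ∧
      ∀ ε : ℝ, 0 < ε → ∃ K : ℝ, 0 ≤ K ∧
        ∀ (x₁ y₁ : EuclideanSpace ℝ (Fin d₁)) (x₂ y₂ : EuclideanSpace ℝ (Fin d₂)),
          |f (x₁ + y₁, x₂ + y₂) - f (x₁, x₂)| ≤
            θ ε * ‖x₁‖ ^ p₁ * ‖x₂‖ ^ p₂ +
              K * (‖y₁‖ ^ p₁ * (‖x₂‖ ^ p₂ + ‖y₂‖ ^ p₂) +
                ‖y₂‖ ^ p₂ * (‖x₁‖ ^ p₁ + ‖y₁‖ ^ p₁)) :=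
  stmt_1_general d₁ d₂ p₁ p₂ hp₁ hp₂ f hf hhom₁ hhom₂
end

section
/- Let d ≥ 1 and p ≥ 0, and let f : ℝ^d → ℝ be continuous with f(λx) = λ^p f(x) for all x ∈ ℝ^d and all λ ≥ 0. Then there exist a function θ : (0,∞) → [0,∞) with θ(ε) → 0 as ε → 0⁺ and, for every ε > 0, a constant K_ε ≥ 0, such that |f(x+y) − f(x)| ≤ θ(ε) ‖x‖^p + K_ε ‖y‖^p for all x, y ∈ ℝ^d. -/
/-!
By homogeneity, `x ↦ ‖x‖⁻¹ • x` reduces everything to the unit ball. When `‖y‖ ≤ ε ‖x‖`, the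
increment `f (x + y) - f x` is `‖x‖ ^ p` times an increment of `f` at a point of the unit ball
by a vector of norm at most `ε`; its size `θ ε` tends to `0` by uniform continuity of `f` on a
compact ball. When `‖y‖ > ε ‖x‖`, both `f (x + y)` and `f x` are bounded separately by the
growth bound `|f z| ≤ M ‖z‖ ^ p`, at the price of a constant depending on `ε`.
-/

open Metric Set Filter Topology

variable {E : Type*} [NormedAddCommGroup E]

section NormedSpace

variable [NormedSpace ℝ E]

def PosHomogeneous (p : ℝ) (f : E → ℝ) : Prop :=
  ∀ l : ℝ, 0 ≤ l → ∀ x, f (l • x) = l ^ p * f x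

lemma norm_smul_inv_norm_smul (x : E) : ‖x‖ • ‖x‖⁻¹ • x = x := by
  rcases eq_or_ne x 0 with rfl | hx
  · simp
  · exact smul_inv_smul₀ (norm_ne_zero_iff.2 hx) x

lemma norm_inv_norm_smul_le_one (x : E) : ‖‖x‖⁻¹ • x‖ ≤ 1 := by
  rcases eq_or_ne x 0 with rfl | hx
  · simp
  · exact (norm_smul_inv_norm hx).le

namespace PosHomogeneous

variable {p : ℝ} {f : E → ℝ}

lemma apply_eq (hf : PosHomogeneous p f) (x : E) : f x = ‖x‖ ^ p * f (‖x‖⁻¹ • x) := by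
  conv_lhs => rw [← norm_smul_inv_norm_smul x]
  exact hf _ (norm_nonneg x) _

lemma abs_le_mul_rpow (hf : PosHomogeneous p f) {M : ℝ} (hM : ∀ u : E, ‖u‖ ≤ 1 → |f u| ≤ M)
    (x : E) : |f x| ≤ M * ‖x‖ ^ p := by
  rw [hf.apply_eq x, abs_mul, abs_of_nonneg (by positivity), mul_comm]
  exact mul_le_mul_of_nonneg_right (hM _ (norm_inv_norm_smul_le_one x)) (by positivity)

lemma abs_sub_le_mul_rpow (hf : PosHomogeneous p f) {ε θ : ℝ} (hε : 0 ≤ ε)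
    (hθ : ∀ u v : E, ‖u‖ ≤ 1 → ‖v‖ ≤ ε → |f (u + v) - f u| ≤ θ) {x y : E}
    (hxy : ‖y‖ ≤ ε * ‖x‖) : |f (x + y) - f x| ≤ θ * ‖x‖ ^ p := by
  have hv : ‖‖x‖⁻¹ • y‖ ≤ ε := by
    rcases (norm_nonneg x).eq_or_lt with hr | hr
    · simp [← hr, hε]
    · rw [norm_smul, norm_inv, norm_norm, inv_mul_le_iff₀ hr, mul_comm]
      exact hxy
  have hy : ‖x‖ • ‖x‖⁻¹ • y = y := by
    rcases eq_or_ne x 0 with rfl | hx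
    · simp [norm_le_zero_iff.1 (by simpa using hxy)]
    · exact smul_inv_smul₀ (norm_ne_zero_iff.2 hx) y
  have hsum : f (x + y) = ‖x‖ ^ p * f (‖x‖⁻¹ • x + ‖x‖⁻¹ • y) := by
    rw [← hf ‖x‖ (norm_nonneg x), smul_add, hy, norm_smul_inv_norm_smul]
  rw [hsum, hf.apply_eq x, ← mul_sub, abs_mul, abs_of_nonneg (by positivity), mul_comm]
  exact mul_le_mul_of_nonneg_right (hθ _ _ (norm_inv_norm_smul_le_one x) hv) (by positivity)

end PosHomogeneous

end NormedSpace

lemma abs_sub_le_of_norm_le_mul {f : E → ℝ} {p M c : ℝ} (hp : 0 ≤ p) (hM : 0 ≤ M) (hc : 0 ≤ c)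
    (hgrowth : ∀ z, |f z| ≤ M * ‖z‖ ^ p) {x y : E} (hxy : ‖x‖ ≤ c * ‖y‖) :
    |f (x + y) - f x| ≤ M * ((c + 1) ^ p + c ^ p) * ‖y‖ ^ p := by
  have hsum : ‖x + y‖ ≤ (c + 1) * ‖y‖ := by
    linarith [norm_add_le x y]
  calc |f (x + y) - f x| ≤ |f (x + y)| + |f x| := abs_sub _ _
    _ ≤ M * ((c + 1) * ‖y‖) ^ p + M * (c * ‖y‖) ^ p := by
      gcongr
      · exact (hgrowth _).trans (by gcongr)
      · exact (hgrowth _).trans (by gcongr)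
    _ = M * ((c + 1) ^ p + c ^ p) * ‖y‖ ^ p := by
      rw [Real.mul_rpow (by positivity) (norm_nonneg _), Real.mul_rpow hc (norm_nonneg _)]
      ring

noncomputable def perturbationModulus (f : E → ℝ) (ε : ℝ) : ℝ :=
  sSup ((fun q : E × E => |f (q.1 + q.2) - f q.1|) '' closedBall 0 1 ×ˢ closedBall 0 ε)

section perturbationModulus

variable [ProperSpace E] {f : E → ℝ}

lemma abs_sub_le_perturbationModulus (hf : Continuous f) {ε : ℝ} {u v : E} (hu : ‖u‖ ≤ 1)
    (hv : ‖v‖ ≤ ε) : |f (u + v) - f u| ≤ perturbationModulus f ε := by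
  refine le_csSup (((isCompact_closedBall _ _).prod (isCompact_closedBall _ _)).bddAbove_image
    (by fun_prop)) ⟨(u, v), ⟨?_, ?_⟩, rfl⟩ <;> simpa

lemma perturbationModulus_nonneg (hf : Continuous f) {ε : ℝ} (hε : 0 ≤ ε) :
    0 ≤ perturbationModulus f ε := by
  simpa using abs_sub_le_perturbationModulus hf (u := 0) (v := 0) (by simp) (by simpa)

lemma tendsto_perturbationModulus (hf : Continuous f) :
    Tendsto (perturbationModulus f) (𝓝[>] 0) (𝓝 0) := by
  rw [Metric.tendsto_nhdsWithin_nhds]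
  intro η hη
  obtain ⟨δ, hδ, hfδ⟩ := Metric.uniformContinuousOn_iff_le.1
    ((isCompact_closedBall (0 : E) 2).uniformContinuousOn_of_continuous hf.continuousOn)
    (η / 2) (half_pos hη)
  refine ⟨min δ 1, lt_min hδ one_pos, fun ε (hε : 0 < ε) hεδ => ?_⟩
  rw [Real.dist_eq, sub_zero, abs_of_pos hε, lt_min_iff] at hεδ
  rw [Real.dist_eq, sub_zero, abs_of_nonneg (perturbationModulus_nonneg hf hε.le)]
  suffices perturbationModulus f ε ≤ η / 2 by linarith
  refine Real.sSup_le ?_ (half_pos hη).le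
  rintro _ ⟨⟨u, v⟩, ⟨hu, hv⟩, rfl⟩
  rw [mem_closedBall_zero_iff] at hu hv
  refine hfδ (u + v) ?_ u ?_ ?_
  · rw [mem_closedBall_zero_iff]
    linarith [norm_add_le u v]
  · rw [mem_closedBall_zero_iff]
    linarith
  · rw [dist_eq_norm, add_sub_cancel_left]
    linarith

end perturbationModulus

theorem stmt_2_general (d : ℕ) (p : ℝ) (hp : 0 ≤ p)
    (f : EuclideanSpace ℝ (Fin d) → ℝ) (hf : Continuous f)
    (hhom : ∀ l : ℝ, 0 ≤ l → ∀ x, f (l • x) = l ^ p * f x) :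
    ∃ θ : ℝ → ℝ, (∀ ε : ℝ, 0 < ε → 0 ≤ θ ε) ∧
      Filter.Tendsto θ (nhdsWithin 0 (Set.Ioi 0)) (nhds 0) ∧
      ∀ ε : ℝ, 0 < ε → ∃ K : ℝ, 0 ≤ K ∧
        ∀ x y : EuclideanSpace ℝ (Fin d),
          |f (x + y) - f x| ≤ θ ε * ‖x‖ ^ p + K * ‖y‖ ^ p := by
  have hhom : PosHomogeneous p f := hhom
  obtain ⟨M, hM⟩ :=
    (isCompact_closedBall (0 : EuclideanSpace ℝ (Fin d)) 1).exists_bound_of_continuousOn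
      hf.continuousOn
  simp only [mem_closedBall_zero_iff, Real.norm_eq_abs] at hM
  have hM0 : 0 ≤ M := (abs_nonneg _).trans (hM 0 (by simp))
  refine ⟨perturbationModulus f, fun ε hε => perturbationModulus_nonneg hf hε.le,
    tendsto_perturbationModulus hf, fun ε hε => ⟨M * ((ε⁻¹ + 1) ^ p + ε⁻¹ ^ p), by positivity,
    fun x y => ?_⟩⟩
  rcases le_or_gt ‖y‖ (ε * ‖x‖) with hsmall | hlarge
  · have hbound := hhom.abs_sub_le_mul_rpow hε.le
      (fun u v hu hv => abs_sub_le_perturbationModulus hf hu hv) hsmall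
    have hK : 0 ≤ M * ((ε⁻¹ + 1) ^ p + ε⁻¹ ^ p) * ‖y‖ ^ p := by positivity
    linarith
  · have hx : ‖x‖ ≤ ε⁻¹ * ‖y‖ := by
      rw [inv_mul_eq_div, le_div_iff₀' hε]
      exact hlarge.le
    have hbound := abs_sub_le_of_norm_le_mul hp hM0 (by positivity) (hhom.abs_le_mul_rpow hM) hx
    have hθ : 0 ≤ perturbationModulus f ε * ‖x‖ ^ p :=
      mul_nonneg (perturbationModulus_nonneg hf hε.le) (by positivity)
    linarith

/-- For `f : ℝ^d → ℝ` continuous and positively homogeneous of degree `p ≥ 0`,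
there is `θ : (0,∞) → [0,∞)` with `θ(ε) → 0` as `ε → 0⁺` and for every `ε > 0` a constant
`K_ε ≥ 0` such that `|f(x+y) − f(x)| ≤ θ(ε)‖x‖^p + K_ε‖y‖^p` for all `x, y`. -/
theorem stmt_2 (d : ℕ) (hd : 1 ≤ d) (p : ℝ) (hp : 0 ≤ p)
    (f : EuclideanSpace ℝ (Fin d) → ℝ) (hf : Continuous f)
    (hhom : ∀ l : ℝ, 0 ≤ l → ∀ x, f (l • x) = l ^ p * f x) :
    ∃ θ : ℝ → ℝ, (∀ ε : ℝ, 0 < ε → 0 ≤ θ ε) ∧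
      Filter.Tendsto θ (nhdsWithin 0 (Set.Ioi 0)) (nhds 0) ∧
      ∀ ε : ℝ, 0 < ε → ∃ K : ℝ, 0 ≤ K ∧
        ∀ x y : EuclideanSpace ℝ (Fin d),
          |f (x + y) - f x| ≤ θ ε * ‖x‖ ^ p + K * ‖y‖ ^ p :=
  stmt_2_general d p hp f hf hhom
end

section
/- Let T > 0 and ρ > 0, and let x¹, x² : [0,∞) → ℝ be càdlàg functions such that |Δx¹(s) · Δx²(s)| ≤ ρ/2 for every s ∈ (0,T]. Then there exists θ > 0 such that for all 0 ≤ s₁ ≤ t₁ ≤ T and 0 ≤ s₂ ≤ t₂ ≤ T with t₁ − s₁ ≤ θ, t₂ − s₂ ≤ θ and (s₁,t₁] ∩ (s₂,t₂] ≠ ∅, one has |(x¹(t₁) − x¹(s₁)) · (x²(t₂) − x²(s₂))| < ρ. -/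
private lemma extract_side (a : ℕ → ℝ) (u : ℝ) :
    ∃ ψ : ℕ → ℕ, StrictMono ψ ∧ ((∀ n, u ≤ a (ψ n)) ∨ (∀ n, a (ψ n) < u)) := by
  have htriv : ∃ᶠ n in Filter.atTop, (u ≤ a n ∨ a n < u) :=
    Filter.Frequently.of_forall (fun n => le_or_gt u (a n))
  rcases Filter.frequently_or_distrib.mp htriv with h | h
  · obtain ⟨ψ, hψ, hP⟩ := Filter.extraction_of_frequently_atTop h
    exact ⟨ψ, hψ, Or.inl hP⟩
  · obtain ⟨ψ, hψ, hP⟩ := Filter.extraction_of_frequently_atTop h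
    exact ⟨ψ, hψ, Or.inr hP⟩

private lemma extract_sides (a b c d : ℕ → ℝ) (u : ℝ) :
    ∃ ψ : ℕ → ℕ, StrictMono ψ ∧
      ((∀ n, u ≤ a (ψ n)) ∨ (∀ n, a (ψ n) < u)) ∧
      ((∀ n, u ≤ b (ψ n)) ∨ (∀ n, b (ψ n) < u)) ∧
      ((∀ n, u ≤ c (ψ n)) ∨ (∀ n, c (ψ n) < u)) ∧
      ((∀ n, u ≤ d (ψ n)) ∨ (∀ n, d (ψ n) < u)) := by
  obtain ⟨ψ₁, h₁, ha⟩ := extract_side a u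
  obtain ⟨ψ₂, h₂, hb⟩ := extract_side (fun n => b (ψ₁ n)) u
  obtain ⟨ψ₃, h₃, hc⟩ := extract_side (fun n => c (ψ₁ (ψ₂ n))) u
  obtain ⟨ψ₄, h₄, hd⟩ := extract_side (fun n => d (ψ₁ (ψ₂ (ψ₃ n)))) u
  refine ⟨fun n => ψ₁ (ψ₂ (ψ₃ (ψ₄ n))), h₁.comp (h₂.comp (h₃.comp h₄)), ?_, ?_, ?_, ?_⟩
  · exact ha.imp (fun h n => h _) (fun h n => h _)
  · exact hb.imp (fun h n => h _) (fun h n => h _)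
  · exact hc.imp (fun h n => h _) (fun h n => h _)
  · exact hd.imp (fun h n => h _) (fun h n => h _)

private lemma tendsto_right' (x : ℝ → ℝ) (u : ℝ)
    (hrc : Filter.Tendsto x (nhdsWithin u (Set.Ici u)) (nhds (x u)))
    (a : ℕ → ℝ) (ha : Filter.Tendsto a Filter.atTop (nhds u)) (hside : ∀ n, u ≤ a n) :
    Filter.Tendsto (fun n => x (a n)) Filter.atTop (nhds (x u)) :=
  hrc.comp (tendsto_nhdsWithin_of_tendsto_nhds_of_eventually_within _ ha
    (Filter.Eventually.of_forall hside))

private lemma tendsto_left' (x : ℝ → ℝ) (L : ℝ) (u : ℝ)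
    (hll : Filter.Tendsto x (nhdsWithin u (Set.Iio u)) (nhds L))
    (a : ℕ → ℝ) (ha : Filter.Tendsto a Filter.atTop (nhds u)) (hside : ∀ n, a n < u) :
    Filter.Tendsto (fun n => x (a n)) Filter.atTop (nhds L) :=
  hll.comp (tendsto_nhdsWithin_of_tendsto_nhds_of_eventually_within _ ha
    (Filter.Eventually.of_forall hside))

private lemma incr_limit (x : ℝ → ℝ) (L : ℝ → ℝ) (u : ℝ)
    (hrc : Filter.Tendsto x (nhdsWithin u (Set.Ici u)) (nhds (x u)))
    (hll : 0 < u → Filter.Tendsto x (nhdsWithin u (Set.Iio u)) (nhds (L u)))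
    (s t : ℕ → ℝ) (hs0 : ∀ n, 0 ≤ s n) (hst : ∀ n, s n ≤ t n)
    (hslim : Filter.Tendsto s Filter.atTop (nhds u))
    (htlim : Filter.Tendsto t Filter.atTop (nhds u))
    (hsside : (∀ n, u ≤ s n) ∨ (∀ n, s n < u))
    (htside : (∀ n, u ≤ t n) ∨ (∀ n, t n < u)) :
    Filter.Tendsto (fun n => x (t n) - x (s n)) Filter.atTop (nhds 0) ∨
    (0 < u ∧ Filter.Tendsto (fun n => x (t n) - x (s n)) Filter.atTop (nhds (x u - L u))) := by
  rcases hsside with hs | hs <;> rcases htside with ht | ht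
  · left
    simpa using (tendsto_right' x u hrc t htlim ht).sub (tendsto_right' x u hrc s hslim hs)
  · exact absurd ((hs 0).trans (hst 0)) (not_le.mpr (ht 0))
  · have hu0 : 0 < u := lt_of_le_of_lt (hs0 0) (hs 0)
    right
    exact ⟨hu0, (tendsto_right' x u hrc t htlim ht).sub
      (tendsto_left' x (L u) u (hll hu0) s hslim hs)⟩
  · have hu0 : 0 < u := lt_of_le_of_lt (hs0 0) (hs 0)
    left
    simpa using (tendsto_left' x (L u) u (hll hu0) t htlim ht).sub
      (tendsto_left' x (L u) u (hll hu0) s hslim hs)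

/-- If `x¹, x² : [0,∞) → ℝ` are càdlàg (right-continuous with left limits
`L₁, L₂`) and all products of jumps satisfy `|Δx¹(s)·Δx²(s)| ≤ ρ/2` on `(0,T]`, then there is
`θ > 0` such that increments over any two overlapping subintervals of `[0,T]` of length at
most `θ` have product of increments of absolute value `< ρ`. -/
theorem stmt_3 (T ρ : ℝ) (hT : 0 < T) (hρ : 0 < ρ)
    (x₁ x₂ L₁ L₂ : ℝ → ℝ)
    (hrc₁ : ∀ s : ℝ, 0 ≤ s → Filter.Tendsto x₁ (nhdsWithin s (Set.Ici s)) (nhds (x₁ s)))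
    (hrc₂ : ∀ s : ℝ, 0 ≤ s → Filter.Tendsto x₂ (nhdsWithin s (Set.Ici s)) (nhds (x₂ s)))
    (hll₁ : ∀ s : ℝ, 0 < s → Filter.Tendsto x₁ (nhdsWithin s (Set.Iio s)) (nhds (L₁ s)))
    (hll₂ : ∀ s : ℝ, 0 < s → Filter.Tendsto x₂ (nhdsWithin s (Set.Iio s)) (nhds (L₂ s)))
    (hjump : ∀ s : ℝ, 0 < s → s ≤ T → |(x₁ s - L₁ s) * (x₂ s - L₂ s)| ≤ ρ / 2) :
    ∃ θ : ℝ, 0 < θ ∧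
      ∀ s₁ t₁ s₂ t₂ : ℝ, 0 ≤ s₁ → s₁ ≤ t₁ → t₁ ≤ T → 0 ≤ s₂ → s₂ ≤ t₂ → t₂ ≤ T →
        t₁ - s₁ ≤ θ → t₂ - s₂ ≤ θ → (Set.Ioc s₁ t₁ ∩ Set.Ioc s₂ t₂).Nonempty →
        |(x₁ t₁ - x₁ s₁) * (x₂ t₂ - x₂ s₂)| < ρ := by
  by_contra hcon
  push_neg at hcon
  have key : ∀ n : ℕ, ∃ a₁ b₁ a₂ b₂ : ℝ, 0 ≤ a₁ ∧ a₁ ≤ b₁ ∧ b₁ ≤ T ∧ 0 ≤ a₂ ∧ a₂ ≤ b₂ ∧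
      b₂ ≤ T ∧ b₁ - a₁ ≤ 1/(n+1 : ℝ) ∧ b₂ - a₂ ≤ 1/(n+1 : ℝ) ∧
      (Set.Ioc a₁ b₁ ∩ Set.Ioc a₂ b₂).Nonempty ∧
      ρ ≤ |(x₁ b₁ - x₁ a₁) * (x₂ b₂ - x₂ a₂)| := by
    intro n
    obtain ⟨a₁, b₁, a₂, b₂, h⟩ := hcon (1/(n+1 : ℝ)) (by positivity)
    exact ⟨a₁, b₁, a₂, b₂, h.1, h.2.1, h.2.2.1, h.2.2.2.1, h.2.2.2.2.1, h.2.2.2.2.2.1,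
      h.2.2.2.2.2.2.1, h.2.2.2.2.2.2.2.1, h.2.2.2.2.2.2.2.2.1, h.2.2.2.2.2.2.2.2.2⟩
  choose a₁ b₁ a₂ b₂ h1 h2 h3 h4 h5 h6 h7 h8 h9 h10 using key
  choose p hp using h9
  -- Bolzano–Weierstrass on b₁
  obtain ⟨u, huIcc, φ, hφ, hblim⟩ := isCompact_Icc.tendsto_subseq
    (x := b₁) (s := Set.Icc 0 T) (fun n => ⟨(h1 n).trans (h2 n), h3 n⟩)
  have hθ : Filter.Tendsto (fun n : ℕ => 2/(n+1 : ℝ)) Filter.atTop (nhds 0) := by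
    have : Filter.Tendsto (fun n : ℕ => 1/((n:ℝ)+1)) Filter.atTop (nhds 0) :=
      tendsto_one_div_add_atTop_nhds_zero_nat
    have h2' := this.const_mul (2:ℝ)
    simpa [mul_one_div, div_eq_mul_inv] using h2'
  have hφn : ∀ n, 1/((φ n : ℝ)+1) ≤ 1/((n:ℝ)+1) := fun n => by
    have h : (n:ℝ) ≤ (φ n : ℝ) := by exact_mod_cast hφ.le_apply
    apply one_div_le_one_div_of_le (by positivity)
    linarith
  -- differences go to 0
  have hd1 : Filter.Tendsto (fun n => b₁ (φ n) - a₁ (φ n)) Filter.atTop (nhds 0) := by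
    refine squeeze_zero_norm (fun n => ?_) hθ
    have := h7 (φ n)
    have h0 := h2 (φ n)
    have := hφn n
    show ‖b₁ (φ n) - a₁ (φ n)‖ ≤ 2/((n:ℝ)+1)
    have h2n : 2/((n:ℝ)+1) = 1/((n:ℝ)+1) + 1/((n:ℝ)+1) := by ring
    have hpos : (0:ℝ) ≤ 1/((n:ℝ)+1) := by positivity
    rw [Real.norm_eq_abs, abs_of_nonneg (by linarith), h2n]
    linarith
  have hd2 : Filter.Tendsto (fun n => b₂ (φ n) - b₁ (φ n)) Filter.atTop (nhds 0) := by
    refine squeeze_zero_norm (fun n => ?_) hθ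
    obtain ⟨⟨hp1, hp2⟩, hp3, hp4⟩ := hp (φ n)
    have l7 := h7 (φ n)
    have l8 := h8 (φ n)
    have := hφn n
    show ‖b₂ (φ n) - b₁ (φ n)‖ ≤ 2/((n:ℝ)+1)
    have h2n : 2/((n:ℝ)+1) = 1/((n:ℝ)+1) + 1/((n:ℝ)+1) := by ring
    rw [Real.norm_eq_abs, abs_le, h2n]
    constructor <;> linarith
  have hd3 : Filter.Tendsto (fun n => b₂ (φ n) - a₂ (φ n)) Filter.atTop (nhds 0) := by
    refine squeeze_zero_norm (fun n => ?_) hθ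
    have := h8 (φ n)
    have h0 := h5 (φ n)
    have hn := hφn n
    show ‖b₂ (φ n) - a₂ (φ n)‖ ≤ 2/((n:ℝ)+1)
    have h2n : 2/((n:ℝ)+1) = 1/((n:ℝ)+1) + 1/((n:ℝ)+1) := by ring
    have hpos : (0:ℝ) ≤ 1/((n:ℝ)+1) := by positivity
    rw [Real.norm_eq_abs, abs_of_nonneg (by linarith), h2n]
    linarith
  have ha1lim : Filter.Tendsto (fun n => a₁ (φ n)) Filter.atTop (nhds u) := by
    have := hblim.sub hd1
    simpa using this
  have hb2lim : Filter.Tendsto (fun n => b₂ (φ n)) Filter.atTop (nhds u) := by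
    have := hblim.add hd2
    simpa using this
  have ha2lim : Filter.Tendsto (fun n => a₂ (φ n)) Filter.atTop (nhds u) := by
    have := hb2lim.sub hd3
    simpa using this
  -- extract a common subsequence where each point is on a fixed side of u
  obtain ⟨ψ, hψ, hsa1, hsb1, hsa2, hsb2⟩ := extract_sides
    (fun n => a₁ (φ n)) (fun n => b₁ (φ n)) (fun n => a₂ (φ n)) (fun n => b₂ (φ n)) u
  set Φ : ℕ → ℕ := fun n => φ (ψ n) with hΦ
  have hψt : Filter.Tendsto ψ Filter.atTop Filter.atTop := hψ.tendsto_atTop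
  have lima1 : Filter.Tendsto (fun n => a₁ (Φ n)) Filter.atTop (nhds u) := ha1lim.comp hψt
  have limb1 : Filter.Tendsto (fun n => b₁ (Φ n)) Filter.atTop (nhds u) := by
    have := hblim.comp hψt; exact this
  have lima2 : Filter.Tendsto (fun n => a₂ (Φ n)) Filter.atTop (nhds u) := ha2lim.comp hψt
  have limb2 : Filter.Tendsto (fun n => b₂ (Φ n)) Filter.atTop (nhds u) := hb2lim.comp hψt
  have hu0 : 0 ≤ u := huIcc.1
  have huT : u ≤ T := huIcc.2
  have I1 := incr_limit x₁ L₁ u (hrc₁ u hu0) (hll₁ u)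
    (fun n => a₁ (Φ n)) (fun n => b₁ (Φ n)) (fun n => h1 (Φ n)) (fun n => h2 (Φ n))
    lima1 limb1 hsa1 hsb1
  have I2 := incr_limit x₂ L₂ u (hrc₂ u hu0) (hll₂ u)
    (fun n => a₂ (Φ n)) (fun n => b₂ (Φ n)) (fun n => h4 (Φ n)) (fun n => h5 (Φ n))
    lima2 limb2 hsa2 hsb2
  -- the product of increments tends to a limit of absolute value ≤ ρ/2
  have hbig : ∀ n, ρ ≤ |(x₁ (b₁ (Φ n)) - x₁ (a₁ (Φ n))) * (x₂ (b₂ (Φ n)) - x₂ (a₂ (Φ n)))| :=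
    fun n => h10 (Φ n)
  have main : ∃ c : ℝ, |c| ≤ ρ/2 ∧
      Filter.Tendsto (fun n => (x₁ (b₁ (Φ n)) - x₁ (a₁ (Φ n))) * (x₂ (b₂ (Φ n)) - x₂ (a₂ (Φ n))))
        Filter.atTop (nhds c) := by
    rcases I1 with h₁' | ⟨hup, h₁'⟩ <;> rcases I2 with h₂' | ⟨_, h₂'⟩
    · exact ⟨0, by simp [le_of_lt (half_pos hρ)], by simpa using h₁'.mul h₂'⟩
    · exact ⟨0, by simp [le_of_lt (half_pos hρ)], by simpa using h₁'.mul h₂'⟩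
    · exact ⟨0, by simp [le_of_lt (half_pos hρ)], by simpa using h₁'.mul h₂'⟩
    · exact ⟨(x₁ u - L₁ u) * (x₂ u - L₂ u), hjump u hup huT, h₁'.mul h₂'⟩
  obtain ⟨c, hc, hclim⟩ := main
  have : ρ ≤ |c| := ge_of_tendsto' (hclim.abs) hbig
  linarith
end

section
/- Let T > 0 and let x¹, x² : [0,∞) → ℝ be càdlàg functions that are continuous at T (i.e. Δx¹(T) = Δx²(T) = 0). Let ρ > 0 and let f : ℝ² → ℝ be continuous with f(a,b) = 0 whenever |ab| < ρ. For each n, let (t_{i,n}^{(1)})_{i≥0} and (t_{i,n}^{(2)})_{i≥0} be an observation scheme pair whose mesh up to T tends to 0 as n → ∞. Then the function s ↦ f(Δx¹(s), Δx²(s)) is nonzero for at most finitely many s ∈ (0,T], and Σ_{i,j≥1 : t_{i,n}^{(1)} ∨ t_{j,n}^{(2)} ≤ T, I_{i,n}^{(1)} ∩ I_{j,n}^{(2)} ≠ ∅} f( x¹(t_{i,n}^{(1)}) − x¹(t_{i−1,n}^{(1)}), x²(t_{j,n}^{(2)}) − x²(t_{j−1,n}^{(2)}) ) converges, as n → ∞,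 to Σ_{0 < s ≤ T} f(Δx¹(s), Δx²(s)). -/
open scoped Classical

/-- The Hayashi–Yoshida-type sum `Σ_{i,j ≥ 1 : t₁(i) ∨ t₂(j) ≤ T, I_i^{(1)} ∩ I_j^{(2)} ≠ ∅} g i j`,
where `I_i^{(1)} = (t₁(i-1), t₁(i)]` and `I_j^{(2)} = (t₂(j-1), t₂(j)]` (indices shifted so that
`i, j : ℕ` corresponds to the pair of intervals `(t₁ i, t₁ (i+1)]`, `(t₂ j, t₂ (j+1)]`). -/
noncomputable def hySum (t₁ t₂ : ℕ → ℝ) (T : ℝ) (g : ℕ → ℕ → ℝ) : ℝ :=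
  ∑' (i : ℕ) (j : ℕ),
    if max (t₁ (i + 1)) (t₂ (j + 1)) ≤ T ∧
        (Set.Ioc (t₁ i) (t₁ (i + 1)) ∩ Set.Ioc (t₂ j) (t₂ (j + 1))).Nonempty
    then g i j else 0

/-- The mesh of the observation scheme pair `(t₁, t₂)` up to time `T`:
`sup_{i ≥ 1, l = 1,2} (t_i^{(l)} ∧ T − t_{i−1}^{(l)} ∧ T)`. -/
noncomputable def meshUpTo (T : ℝ) (t₁ t₂ : ℕ → ℝ) : ℝ :=
  ⨆ i : ℕ, max (min (t₁ (i + 1)) T - min (t₁ i) T) (min (t₂ (i + 1)) T - min (t₂ i) T)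

open Filter Set Metric

lemma aux_pos_lb (A : Set ℝ) (hA : A.Finite) (h : ∀ a ∈ A, 0 < a) :
    ∃ c, 0 < c ∧ ∀ a ∈ A, c ≤ a := by
  classical
  revert h
  refine Set.Finite.induction_on A hA ?_ ?_
  · exact fun _ => ⟨1, one_pos, by simp⟩
  · intro a s _ _ ih h
    obtain ⟨c, hc, hcs⟩ := ih (fun b hb => h b (Set.mem_insert_of_mem _ hb))
    refine ⟨min c a, lt_min hc (h a (Set.mem_insert _ _)), ?_⟩
    rintro b (rfl | hb)
    · exact min_le_right _ _
    · exact le_trans (min_le_left _ _) (hcs b hb)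

lemma aux_sep (A : Set ℝ) (hA : A.Finite) :
    ∃ γ, 0 < γ ∧ ∀ a ∈ A, ∀ b ∈ A, a ≠ b → γ ≤ |a - b| := by
  obtain ⟨c, hc, hcs⟩ := aux_pos_lb ((fun p : ℝ × ℝ => |p.1 - p.2|) ''
      ((A ×ˢ A) ∩ {p | p.1 ≠ p.2}))
    (Set.Finite.image _ ((hA.prod hA).subset (Set.inter_subset_left)))
    (by rintro _ ⟨⟨a, b⟩, ⟨⟨-, -⟩, hab⟩, rfl⟩
        exact abs_pos.2 (sub_ne_zero.2 hab))
  exact ⟨c, hc, fun a ha b hb hab => hcs _ ⟨(a, b), ⟨⟨ha, hb⟩, hab⟩, rfl⟩⟩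

lemma idx_ex (t : ℕ → ℝ) (h0 : t 0 = 0) (hinf : Filter.Tendsto t Filter.atTop Filter.atTop)
    (s : ℝ) (hs : 0 < s) : ∃ i, t i < s ∧ s ≤ t (i + 1) := by
  have hex : ∃ k, s ≤ t k := by
    obtain ⟨k, hk⟩ := (hinf.eventually_ge_atTop s).exists
    exact ⟨k, hk⟩
  classical
  set k := Nat.find hex with hkdef
  have hk : s ≤ t k := Nat.find_spec hex
  have hk0 : k ≠ 0 := by
    intro h
    rw [h, h0] at hk; linarith
  refine ⟨k - 1, ?_, ?_⟩
  · have := Nat.find_min hex (m := k - 1) (by omega)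
    push_neg at this; exact this
  · have : k - 1 + 1 = k := by omega
    rw [this]; exact hk

lemma idx_unique {t : ℕ → ℝ} (hm : StrictMono t) {s : ℝ} {i j : ℕ}
    (h1 : t i < s) (h2 : s ≤ t (i + 1)) (h3 : t j < s) (h4 : s ≤ t (j + 1)) : i = j := by
  rcases lt_trichotomy i j with h | h | h
  · exact absurd (lt_of_le_of_lt (h2.trans (hm.monotone (by omega : i + 1 ≤ j))) h3) (lt_irrefl s)
  · exact h
  · exact absurd (lt_of_le_of_lt (h4.trans (hm.monotone (by omega : j + 1 ≤ i))) h1) (lt_irrefl s)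

lemma tsum_tsum_eq_sum (h : ℕ → ℕ → ℝ) (P : Finset (ℕ × ℕ))
    (h0 : ∀ i j, (i, j) ∉ P → h i j = 0) :
    ∑' (i : ℕ) (j : ℕ), h i j = ∑ p ∈ P, h p.1 p.2 := by
  classical
  have hinner : ∀ i, ∑' j, h i j = ∑ j ∈ P.image Prod.snd, h i j := by
    intro i
    refine tsum_eq_sum fun j hj => ?_
    by_contra hne
    exact hj (Finset.mem_image.2 ⟨(i, j), by_contra fun hp => hne (h0 i j hp), rfl⟩)
  calc ∑' (i : ℕ) (j : ℕ), h i j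
      = ∑' i, ∑ j ∈ P.image Prod.snd, h i j := by simp_rw [hinner]
    _ = ∑ i ∈ P.image Prod.fst, ∑ j ∈ P.image Prod.snd, h i j := by
        refine tsum_eq_sum fun i hi => Finset.sum_eq_zero fun j _ => ?_
        refine h0 i j fun hp => hi (Finset.mem_image.2 ⟨(i, j), hp, rfl⟩)
    _ = ∑ p ∈ (P.image Prod.fst) ×ˢ (P.image Prod.snd), h p.1 p.2 :=
        (Finset.sum_product' _ _ _).symm
    _ = ∑ p ∈ P, h p.1 p.2 := by
        refine (Finset.sum_subset ?_ ?_).symm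
        · intro p hp
          exact Finset.mem_product.2 ⟨Finset.mem_image.2 ⟨p, hp, rfl⟩,
            Finset.mem_image.2 ⟨p, hp, rfl⟩⟩
        · intro p _ hp
          exact h0 p.1 p.2 (by simpa using hp)

section cover
variable (x L : ℝ → ℝ) (T ε : ℝ)

lemma aux_cover (hT : 0 < T) (hε : 0 < ε)
    (hrc : ∀ s : ℝ, 0 ≤ s → Tendsto x (nhdsWithin s (Set.Ici s)) (nhds (x s)))
    (hll : ∀ s : ℝ, 0 < s → Tendsto x (nhdsWithin s (Set.Iio s)) (nhds (L s))) :
    ∃ (F : Finset ℝ) (η : ℝ → ℝ),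
      (∀ p ∈ F, 0 ≤ p ∧ p ≤ T ∧ 0 < η p ∧
        (∀ r, p ≤ r → r < p + η p → |x r - x p| < ε) ∧
        (∀ r, 0 ≤ r → p - η p < r → r < p → |x r - L p| < ε)) ∧
      (∀ s, 0 ≤ s → s ≤ T → ∃ p ∈ F, |s - p| < η p / 2) := by
  have hex : ∀ p : ℝ, ∃ η, 0 < η ∧ (0 ≤ p → p ≤ T →
      ((∀ r, p ≤ r → r < p + η → |x r - x p| < ε) ∧
       (∀ r, 0 ≤ r → p - η < r → r < p → |x r - L p| < ε))) := by
    intro p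
    by_cases hp : 0 ≤ p ∧ p ≤ T
    · obtain ⟨hp0, hpT⟩ := hp
      obtain ⟨δr, hδr, hr⟩ := Metric.tendsto_nhdsWithin_nhds.1 (hrc p hp0) ε hε
      by_cases hp0' : 0 < p
      · obtain ⟨δl, hδl, hl⟩ := Metric.tendsto_nhdsWithin_nhds.1 (hll p hp0') ε hε
        refine ⟨min δr δl, lt_min hδr hδl, fun _ _ => ⟨?_, ?_⟩⟩
        · intro r hr1 hr2
          have : dist r p < δr := by
            rw [Real.dist_eq, abs_of_nonneg (by linarith)]
            have := lt_min_iff.1 (show r - p < min δr δl by linarith)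
            linarith [this.1]
          simpa [Real.dist_eq] using hr hr1 this
        · intro r _ hr1 hr2
          have : dist r p < δl := by
            rw [Real.dist_eq, abs_of_nonpos (by linarith)]
            have := lt_min_iff.1 (show p - r < min δr δl by linarith)
            linarith [this.2]
          simpa [Real.dist_eq] using hl hr2 this
      · have hp0'' : p = 0 := le_antisymm (not_lt.1 hp0') hp0
        refine ⟨δr, hδr, fun _ _ => ⟨?_, ?_⟩⟩
        · intro r hr1 hr2
          have : dist r p < δr := by
            rw [Real.dist_eq, abs_of_nonneg (by linarith)]; linarith
          simpa [Real.dist_eq] using hr hr1 this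
        · intro r hr0 _ hrp
          exact absurd (lt_of_le_of_lt hr0 (hp0'' ▸ hrp)) (lt_irrefl _)
    · exact ⟨1, one_pos, fun h1 h2 => absurd ⟨h1, h2⟩ hp⟩
  choose η hη hηp using hex
  obtain ⟨F, hFmem, hFcov⟩ := (isCompact_Icc (a := (0:ℝ)) (b := T)).elim_nhds_subcover
    (fun p => Metric.ball p (η p / 2))
    (fun p _ => Metric.ball_mem_nhds p (by linarith [hη p]))
  refine ⟨F, η, ?_, ?_⟩
  · intro p hp
    obtain ⟨h0, hT'⟩ := hFmem p hp
    exact ⟨h0, hT', hη p, (hηp p h0 hT').1, (hηp p h0 hT').2⟩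
  · intro s hs0 hsT
    obtain ⟨p, hp, hps⟩ := Set.mem_iUnion₂.1 (hFcov ⟨hs0, hsT⟩)
    exact ⟨p, hp, by simpa [Real.dist_eq] using hps⟩

lemma lemA (hT : 0 < T) (hε : 0 < ε)
    (hrc : ∀ s : ℝ, 0 ≤ s → Tendsto x (nhdsWithin s (Set.Ici s)) (nhds (x s)))
    (hll : ∀ s : ℝ, 0 < s → Tendsto x (nhdsWithin s (Set.Iio s)) (nhds (L s))) :
    ∃ δ, 0 < δ ∧ ∀ u v, 0 ≤ u → u < v → v ≤ T → v - u < δ →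
      ∃ s, u < s ∧ s ≤ v ∧ |x v - x u| ≤ 2 * ε + |x s - L s| := by
  obtain ⟨F, η, hF, hcov⟩ := aux_cover x L T ε hT hε hrc hll
  obtain ⟨δ, hδ, hδle⟩ := aux_pos_lb ((fun p => η p / 2) '' ↑F)
    (F.finite_toSet.image _) (by rintro _ ⟨p, hp, rfl⟩; linarith [(hF p hp).2.2.1])
  refine ⟨δ, hδ, fun u v hu0 huv hvT hlen => ?_⟩
  obtain ⟨p, hp, hup⟩ := hcov u hu0 (le_of_lt (lt_of_lt_of_le huv hvT))
  obtain ⟨hp0, hpT, hηp, hright, hleft⟩ := hF p hp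
  have hδη : δ ≤ η p / 2 := hδle _ ⟨p, hp, rfl⟩
  have hvp : |v - p| < η p := by
    have h2 : |v - p| ≤ |v - u| + |u - p| := by
      calc |v - p| = |(v - u) + (u - p)| := by ring_nf
        _ ≤ |v - u| + |u - p| := abs_add_le _ _
    have h1 : |v - u| < δ := by rw [abs_of_nonneg (by linarith)]; linarith
    linarith
  have habs_u := abs_lt.1 hup
  have habs_v := abs_lt.1 hvp
  rcases le_or_gt p u with hpu | hup'
  · refine ⟨v, huv, le_refl v, ?_⟩
    have h1 : |x u - x p| < ε := hright u hpu (by linarith)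
    have h2 : |x v - x p| < ε := hright v (le_trans hpu (le_of_lt huv)) (by linarith)
    have h3 : |x v - x u| ≤ |x v - x p| + |x u - x p| := by
      calc |x v - x u| = |(x v - x p) - (x u - x p)| := by ring_nf
        _ ≤ |x v - x p| + |x u - x p| := abs_sub _ _
    have habs : (0:ℝ) ≤ |x v - L v| := abs_nonneg _
    linarith
  · rcases le_or_gt p v with hpv | hvp'
    · refine ⟨p, hup', hpv, ?_⟩
      have h1 : |x u - L p| < ε := hleft u hu0 (by linarith) hup'
      have h2 : |x v - x p| < ε := hright v hpv (by linarith)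
      have h3 : |x v - x u| ≤ |x v - x p| + |x p - L p| + |x u - L p| := by
        calc |x v - x u| = |(x v - x p) + (x p - L p) - (x u - L p)| := by ring_nf
          _ ≤ |(x v - x p) + (x p - L p)| + |x u - L p| := abs_sub _ _
          _ ≤ |x v - x p| + |x p - L p| + |x u - L p| := by
              linarith [abs_add_le (x v - x p) (x p - L p)]
      linarith
    · refine ⟨v, huv, le_refl v, ?_⟩
      have h1 : |x u - L p| < ε := hleft u hu0 (by linarith) (by linarith)
      have h2 : |x v - L p| < ε := hleft v (by linarith) (by linarith) hvp'
      have h3 : |x v - x u| ≤ |x v - L p| + |x u - L p| := by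
        calc |x v - x u| = |(x v - L p) - (x u - L p)| := by ring_nf
          _ ≤ |x v - L p| + |x u - L p| := abs_sub _ _
      have habs : (0:ℝ) ≤ |x v - L v| := abs_nonneg _
      linarith

lemma finJumps (hT : 0 < T) (hε : 0 < ε)
    (hrc : ∀ s : ℝ, 0 ≤ s → Tendsto x (nhdsWithin s (Set.Ici s)) (nhds (x s)))
    (hll : ∀ s : ℝ, 0 < s → Tendsto x (nhdsWithin s (Set.Iio s)) (nhds (L s))) :
    {s : ℝ | 0 < s ∧ s ≤ T ∧ ε ≤ |x s - L s|}.Finite := by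
  have hε3 : 0 < ε / 3 := by linarith
  obtain ⟨F, η, hF, hcov⟩ := aux_cover x L T (ε / 3) hT hε3 hrc hll
  refine Set.Finite.subset F.finite_toSet ?_
  rintro a ⟨ha0, haT, haj⟩
  obtain ⟨p, hp, hap⟩ := hcov a (le_of_lt ha0) haT
  obtain ⟨hp0, hpT, hηp, hright, hleft⟩ := hF p hp
  have habs := abs_lt.1 hap
  rcases lt_trichotomy p a with hpa | rfl | hap'
  · exfalso
    have h1 : |x a - x p| < ε / 3 := hright a (le_of_lt hpa) (by linarith)
    have h2 : |L a - x p| ≤ ε / 3 := by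
      have hev : ∀ᶠ r in nhdsWithin a (Set.Iio a), |x r - x p| ≤ ε / 3 := by
        have h3 : ∀ᶠ r in nhdsWithin a (Set.Iio a), r ∈ Set.Ioi p :=
          mem_nhdsWithin_of_mem_nhds (Ioi_mem_nhds hpa)
        have h4 : ∀ᶠ r in nhdsWithin a (Set.Iio a), r ∈ Set.Iio a :=
          eventually_mem_nhdsWithin
        filter_upwards [h3, h4] with r hr1 hr2
        exact le_of_lt (hright r (le_of_lt hr1) (by
          simp only [Set.mem_Iio] at hr2; linarith))
      exact le_of_tendsto (((hll a ha0).sub_const (x p)).abs) hev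
    have h5 : |x a - L a| ≤ |x a - x p| + |L a - x p| := by
      calc |x a - L a| = |(x a - x p) - (L a - x p)| := by ring_nf
        _ ≤ |x a - x p| + |L a - x p| := abs_sub _ _
    linarith
  · exact hp
  · exfalso
    have h1 : |x a - L p| < ε / 3 := hleft a (le_of_lt ha0) (by linarith) hap'
    have h2 : |L a - L p| ≤ ε / 3 := by
      have hev : ∀ᶠ r in nhdsWithin a (Set.Iio a), |x r - L p| ≤ ε / 3 := by
        have h3 : ∀ᶠ r in nhdsWithin a (Set.Iio a), r ∈ Set.Ioi (max 0 (p - η p)) :=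
          mem_nhdsWithin_of_mem_nhds (Ioi_mem_nhds (max_lt ha0 (by linarith)))
        have h4 : ∀ᶠ r in nhdsWithin a (Set.Iio a), r ∈ Set.Iio a :=
          eventually_mem_nhdsWithin
        filter_upwards [h3, h4] with r hr1 hr2
        simp only [Set.mem_Ioi, max_lt_iff, Set.mem_Iio] at hr1 hr2
        exact le_of_lt (hleft r (le_of_lt hr1.1) hr1.2 (lt_trans hr2 hap'))
      exact le_of_tendsto (((hll a ha0).sub_const (L p)).abs) hev
    have h5 : |x a - L a| ≤ |x a - L p| + |L a - L p| := by
      calc |x a - L a| = |(x a - L p) - (L a - L p)| := by ring_nf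
        _ ≤ |x a - L p| + |L a - L p| := abs_sub _ _
    linarith

lemma bnd (hT : 0 < T)
    (hrc : ∀ s : ℝ, 0 ≤ s → Tendsto x (nhdsWithin s (Set.Ici s)) (nhds (x s)))
    (hll : ∀ s : ℝ, 0 < s → Tendsto x (nhdsWithin s (Set.Iio s)) (nhds (L s))) :
    ∃ C, 1 ≤ C ∧ (∀ s, 0 ≤ s → s ≤ T → |x s| ≤ C) ∧
      (∀ s, 0 < s → s ≤ T → |L s| ≤ C) := by
  obtain ⟨F, η, hF, hcov⟩ := aux_cover x L T 1 hT one_pos hrc hll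
  classical
  set C : ℝ := 1 + ∑ q ∈ F, (|x q| + |L q|) with hC
  have hCnonneg : ∀ q ∈ F, (0:ℝ) ≤ |x q| + |L q| := fun q _ =>
    add_nonneg (abs_nonneg _) (abs_nonneg _)
  have hC1 : 1 ≤ C := by
    have := Finset.sum_nonneg hCnonneg
    simp only [hC]; linarith
  have hterm : ∀ q ∈ F, |x q| + |L q| ≤ ∑ q ∈ F, (|x q| + |L q|) :=
    fun q hq => Finset.single_le_sum hCnonneg hq
  have hxbnd : ∀ s, 0 ≤ s → s ≤ T → |x s| ≤ C := by
    intro s hs0 hsT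
    obtain ⟨p, hp, hps⟩ := hcov s hs0 hsT
    obtain ⟨hp0, hpT, hηp, hright, hleft⟩ := hF p hp
    have habs := abs_lt.1 hps
    rcases le_or_gt p s with hps' | hsp'
    · have h1 : |x s - x p| < 1 := hright s hps' (by linarith)
      have h2 : |x s| ≤ |x s - x p| + |x p| := by
        calc |x s| = |(x s - x p) + x p| := by ring_nf
          _ ≤ |x s - x p| + |x p| := abs_add_le _ _
      have := hterm p hp
      have h3 : |x p| ≤ |x p| + |L p| := by linarith [abs_nonneg (L p)]
      simp only [hC]; linarith
    · have h1 : |x s - L p| < 1 := hleft s hs0 (by linarith) hsp'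
      have h2 : |x s| ≤ |x s - L p| + |L p| := by
        calc |x s| = |(x s - L p) + L p| := by ring_nf
          _ ≤ |x s - L p| + |L p| := abs_add_le _ _
      have := hterm p hp
      have h3 : |L p| ≤ |x p| + |L p| := by linarith [abs_nonneg (x p)]
      simp only [hC]; linarith
  refine ⟨C, hC1, hxbnd, ?_⟩
  intro s hs0 hsT
  have hev : ∀ᶠ r in nhdsWithin s (Set.Iio s), |x r| ≤ C := by
    have h3 : ∀ᶠ r in nhdsWithin s (Set.Iio s), r ∈ Set.Ioi (0:ℝ) :=
      mem_nhdsWithin_of_mem_nhds (Ioi_mem_nhds hs0)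
    have h4 : ∀ᶠ r in nhdsWithin s (Set.Iio s), r ∈ Set.Iio s :=
      eventually_mem_nhdsWithin
    filter_upwards [h3, h4] with r hr1 hr2
    simp only [Set.mem_Ioi, Set.mem_Iio] at hr1 hr2
    exact hxbnd r (le_of_lt hr1) (by linarith)
  exact le_of_tendsto ((hll s hs0).abs) hev

end cover
set_option maxHeartbeats 2000000 in
/-- For càdlàg `x¹, x²` continuous at `T` and a continuous `f : ℝ² → ℝ`
vanishing on `{|ab| < ρ}`, the jump functional `s ↦ f(Δx¹(s), Δx²(s))` has finite support on
`(0,T]` and the Hayashi–Yoshida-type sums converge to `Σ_{0 < s ≤ T} f(Δx¹(s), Δx²(s))` along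
any sequence of observation scheme pairs whose meshes up to `T` tend to `0`. -/
theorem stmt_4 (T : ℝ) (hT : 0 < T)
    (x₁ x₂ L₁ L₂ : ℝ → ℝ)
    (hrc₁ : ∀ s : ℝ, 0 ≤ s → Filter.Tendsto x₁ (nhdsWithin s (Set.Ici s)) (nhds (x₁ s)))
    (hrc₂ : ∀ s : ℝ, 0 ≤ s → Filter.Tendsto x₂ (nhdsWithin s (Set.Ici s)) (nhds (x₂ s)))
    (hll₁ : ∀ s : ℝ, 0 < s → Filter.Tendsto x₁ (nhdsWithin s (Set.Iio s)) (nhds (L₁ s)))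
    (hll₂ : ∀ s : ℝ, 0 < s → Filter.Tendsto x₂ (nhdsWithin s (Set.Iio s)) (nhds (L₂ s)))
    (hcontT₁ : x₁ T = L₁ T) (hcontT₂ : x₂ T = L₂ T)
    (ρ : ℝ) (hρ : 0 < ρ) (f : ℝ × ℝ → ℝ) (hf : Continuous f)
    (hf0 : ∀ a b : ℝ, |a * b| < ρ → f (a, b) = 0)
    (t₁ t₂ : ℕ → ℕ → ℝ)
    (hmono₁ : ∀ n, StrictMono (t₁ n)) (hmono₂ : ∀ n, StrictMono (t₂ n))
    (h0₁ : ∀ n, t₁ n 0 = 0) (h0₂ : ∀ n, t₂ n 0 = 0)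
    (hinf₁ : ∀ n, Filter.Tendsto (t₁ n) Filter.atTop Filter.atTop)
    (hinf₂ : ∀ n, Filter.Tendsto (t₂ n) Filter.atTop Filter.atTop)
    (hmesh : Filter.Tendsto (fun n => meshUpTo T (t₁ n) (t₂ n)) Filter.atTop (nhds 0)) :
    {s : ℝ | s ∈ Set.Ioc 0 T ∧ f (x₁ s - L₁ s, x₂ s - L₂ s) ≠ 0}.Finite ∧
      Filter.Tendsto
        (fun n => hySum (t₁ n) (t₂ n) T
          (fun i j => f (x₁ (t₁ n (i + 1)) - x₁ (t₁ n i), x₂ (t₂ n (j + 1)) - x₂ (t₂ n j))))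
        Filter.atTop
        (nhds (∑' s : Set.Ioc (0 : ℝ) T,
          f (x₁ (s : ℝ) - L₁ (s : ℝ), x₂ (s : ℝ) - L₂ (s : ℝ)))) := by
  classical
  -- bounds
  obtain ⟨C₁, hC₁1, hx₁b, hL₁b⟩ := bnd x₁ L₁ T hT hrc₁ hll₁
  obtain ⟨C₂, hC₂1, hx₂b, hL₂b⟩ := bnd x₂ L₂ T hT hrc₂ hll₂
  set C : ℝ := max C₁ C₂ with hCdef
  have hC1 : (1:ℝ) ≤ C := le_trans hC₁1 (le_max_left _ _)
  have hC0 : (0:ℝ) < C := by linarith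
  have hΔ₁b : ∀ s, 0 < s → s ≤ T → |x₁ s - L₁ s| ≤ 2 * C := by
    intro s h1 h2
    have e1 := hx₁b s h1.le h2
    have e2 := hL₁b s h1 h2
    have e3 : C₁ ≤ C := le_max_left _ _
    calc |x₁ s - L₁ s| ≤ |x₁ s| + |L₁ s| := abs_sub _ _
      _ ≤ 2 * C := by linarith
  have hΔ₂b : ∀ s, 0 < s → s ≤ T → |x₂ s - L₂ s| ≤ 2 * C := by
    intro s h1 h2
    have e1 := hx₂b s h1.le h2
    have e2 := hL₂b s h1 h2
    have e3 : C₂ ≤ C := le_max_right _ _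
    calc |x₂ s - L₂ s| ≤ |x₂ s| + |L₂ s| := abs_sub _ _
      _ ≤ 2 * C := by linarith
  set θ : ℝ := ρ / (4 * C) with hθdef
  have hθ0 : 0 < θ := div_pos hρ (by linarith)
  have hθ2C : θ * (2 * C) = ρ / 2 := by
    rw [hθdef, div_mul_eq_mul_div, div_eq_div_iff (ne_of_gt (by linarith)) two_ne_zero]
    ring
  -- jump sets
  set B₁ : Set ℝ := {s : ℝ | 0 < s ∧ s ≤ T ∧ θ ≤ |x₁ s - L₁ s|} with hB₁def
  set B₂ : Set ℝ := {s : ℝ | 0 < s ∧ s ≤ T ∧ θ ≤ |x₂ s - L₂ s|} with hB₂def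
  have hB₁fin : B₁.Finite := finJumps x₁ L₁ T θ hT hθ0 hrc₁ hll₁
  have hB₂fin : B₂.Finite := finJumps x₂ L₂ T θ hT hθ0 hrc₂ hll₂
  set S' : Set ℝ := {s : ℝ | (0 < s ∧ s ≤ T) ∧ θ ≤ |x₁ s - L₁ s| ∧ θ ≤ |x₂ s - L₂ s|}
    with hS'def
  have hS'sub₁ : S' ⊆ B₁ := fun s hs => ⟨hs.1.1, hs.1.2, hs.2.1⟩
  have hS'sub₂ : S' ⊆ B₂ := fun s hs => ⟨hs.1.1, hs.1.2, hs.2.2⟩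
  have hS'fin : S'.Finite := hB₁fin.subset hS'sub₁
  have hS'T : ∀ s ∈ S', s < T := by
    intro s hs
    refine lt_of_le_of_ne hs.1.2 ?_
    intro heq
    rw [heq] at hs
    have h0 : x₁ T - L₁ T = 0 := sub_eq_zero.2 hcontT₁
    have h1 := hs.2.1
    rw [h0, abs_zero] at h1
    exact absurd h1 (not_le.2 hθ0)
  -- vanishing outside S'
  have hvanish : ∀ s, 0 < s → s ≤ T → s ∉ S' → f (x₁ s - L₁ s, x₂ s - L₂ s) = 0 := by
    intro s h1 h2 hns
    apply hf0
    have hb1 := hΔ₁b s h1 h2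
    have hb2 := hΔ₂b s h1 h2
    have hcase : |x₁ s - L₁ s| < θ ∨ |x₂ s - L₂ s| < θ := by
      by_contra hcon
      push_neg at hcon
      exact hns ⟨⟨h1, h2⟩, hcon.1, hcon.2⟩
    rw [abs_mul]
    rcases hcase with hc | hc
    · calc |x₁ s - L₁ s| * |x₂ s - L₂ s| ≤ |x₁ s - L₁ s| * (2 * C) :=
          mul_le_mul_of_nonneg_left hb2 (abs_nonneg _)
        _ < θ * (2 * C) := mul_lt_mul_of_pos_right hc (by linarith)
        _ = ρ / 2 := hθ2C
        _ < ρ := by linarith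
    · calc |x₁ s - L₁ s| * |x₂ s - L₂ s| ≤ (2 * C) * |x₂ s - L₂ s| :=
          mul_le_mul_of_nonneg_right hb1 (abs_nonneg _)
        _ < (2 * C) * θ := mul_lt_mul_of_pos_left hc (by linarith)
        _ = ρ / 2 := by rw [mul_comm]; exact hθ2C
        _ < ρ := by linarith
  have hfin : {s : ℝ | s ∈ Set.Ioc 0 T ∧ f (x₁ s - L₁ s, x₂ s - L₂ s) ≠ 0}.Finite := by
    refine hS'fin.subset ?_
    intro s hs
    by_contra hns
    exact hs.2 (hvanish s hs.1.1 hs.1.2 hns)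
  refine ⟨hfin, ?_⟩
  -- rewrite the target tsum as a finite sum over S'
  have htarget : (∑' s : Set.Ioc (0 : ℝ) T,
      f (x₁ (s : ℝ) - L₁ (s : ℝ), x₂ (s : ℝ) - L₂ (s : ℝ)))
      = ∑ s ∈ hS'fin.toFinset, f (x₁ s - L₁ s, x₂ s - L₂ s) := by
    refine Eq.trans (tsum_subtype (Set.Ioc (0:ℝ) T)
      (fun r => f (x₁ r - L₁ r, x₂ r - L₂ r))) ?_
    refine (tsum_eq_sum ?_).trans (Finset.sum_congr rfl ?_)
    · intro b hb
      by_cases hbI : b ∈ Set.Ioc (0:ℝ) T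
      · rw [Set.indicator_of_mem hbI]
        exact hvanish b hbI.1 hbI.2 (fun h => hb (hS'fin.mem_toFinset.2 h))
      · exact Set.indicator_of_notMem hbI _
    · intro b hb
      have hbS := hS'fin.mem_toFinset.1 hb
      exact Set.indicator_of_mem (Set.mem_Ioc.2 ⟨hbS.1.1, hbS.1.2⟩) _
  rw [htarget]
  -- constants
  set ε : ℝ := min 1 (ρ / (8 * (1 + 2 * C))) with hεdef
  have hε0 : 0 < ε := lt_min one_pos (div_pos hρ (by linarith))
  have hε1 : ε ≤ 1 := min_le_left _ _
  have hε2 : ε * (8 * (1 + 2 * C)) ≤ ρ := by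
    have h := min_le_right 1 (ρ / (8 * (1 + 2 * C)))
    rw [hεdef]
    calc (min 1 (ρ / (8 * (1 + 2 * C)))) * (8 * (1 + 2 * C))
        ≤ (ρ / (8 * (1 + 2 * C))) * (8 * (1 + 2 * C)) :=
          mul_le_mul_of_nonneg_right h (by linarith)
      _ = ρ := by field_simp
  obtain ⟨δ₁, hδ₁0, hδ₁⟩ := lemA x₁ L₁ T ε hT hε0 hrc₁ hll₁
  obtain ⟨δ₂, hδ₂0, hδ₂⟩ := lemA x₂ L₂ T ε hT hε0 hrc₂ hll₂
  obtain ⟨γ, hγ0, hγ⟩ := aux_sep (B₁ ∪ B₂) (hB₁fin.union hB₂fin)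
  obtain ⟨δ₃, hδ₃0, hδ₃⟩ := aux_pos_lb ((fun s => T - s) '' S') (hS'fin.image _)
    (by rintro _ ⟨s, hs, rfl⟩; have := hS'T s hs; show (0:ℝ) < T - s; linarith)
  set δ : ℝ := min (min δ₁ δ₂) (min (γ / 2) δ₃) with hδdef
  have hδ0 : 0 < δ := lt_min (lt_min hδ₁0 hδ₂0) (lt_min (by linarith) hδ₃0)
  have hδle₁ : δ ≤ δ₁ := le_trans (min_le_left _ _) (min_le_left _ _)
  have hδle₂ : δ ≤ δ₂ := le_trans (min_le_left _ _) (min_le_right _ _)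
  have hδleγ : δ ≤ γ / 2 := le_trans (min_le_right _ _) (min_le_left _ _)
  have hδle₃ : δ ≤ δ₃ := le_trans (min_le_right _ _) (min_le_right _ _)
  -- index functions
  have hex1 : ∀ (n : ℕ) (s : ℝ), ∃ i, 0 < s → (t₁ n i < s ∧ s ≤ t₁ n (i + 1)) := by
    intro n s
    by_cases hs : 0 < s
    · obtain ⟨i, h⟩ := idx_ex (t₁ n) (h0₁ n) (hinf₁ n) s hs
      exact ⟨i, fun _ => h⟩
    · exact ⟨0, fun h => absurd h hs⟩
  have hex2 : ∀ (n : ℕ) (s : ℝ), ∃ i, 0 < s → (t₂ n i < s ∧ s ≤ t₂ n (i + 1)) := by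
    intro n s
    by_cases hs : 0 < s
    · obtain ⟨i, h⟩ := idx_ex (t₂ n) (h0₂ n) (hinf₂ n) s hs
      exact ⟨i, fun _ => h⟩
    · exact ⟨0, fun h => absurd h hs⟩
  choose I₁ hI₁ using hex1
  choose I₂ hI₂ using hex2
  set φ : ℕ → ℝ → ℝ := fun n s =>
    f (x₁ (t₁ n (I₁ n s + 1)) - x₁ (t₁ n (I₁ n s)),
       x₂ (t₂ n (I₂ n s + 1)) - x₂ (t₂ n (I₂ n s))) with hφdef
  -- nonnegativity of times
  have ht₁0 : ∀ n i, 0 ≤ t₁ n i := fun n i => (h0₁ n) ▸ (hmono₁ n).monotone (Nat.zero_le i)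
  have ht₂0 : ∀ n i, 0 ≤ t₂ n i := fun n i => (h0₂ n) ▸ (hmono₂ n).monotone (Nat.zero_le i)
  -- mesh bounds
  have hmle₁ : ∀ n k, min (t₁ n (k + 1)) T - min (t₁ n k) T ≤ meshUpTo T (t₁ n) (t₂ n) := by
    intro n k
    have hbdd : BddAbove (Set.range fun i =>
        max (min (t₁ n (i + 1)) T - min (t₁ n i) T) (min (t₂ n (i + 1)) T - min (t₂ n i) T)) := by
      refine ⟨T, ?_⟩
      rintro _ ⟨i, rfl⟩
      have e1 : min (t₁ n (i + 1)) T ≤ T := min_le_right _ _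
      have e2 : (0:ℝ) ≤ min (t₁ n i) T := le_min (ht₁0 n i) hT.le
      have e3 : min (t₂ n (i + 1)) T ≤ T := min_le_right _ _
      have e4 : (0:ℝ) ≤ min (t₂ n i) T := le_min (ht₂0 n i) hT.le
      exact max_le (by linarith) (by linarith)
    exact le_trans (le_max_left _ _) (le_ciSup hbdd k)
  have hmle₂ : ∀ n k, min (t₂ n (k + 1)) T - min (t₂ n k) T ≤ meshUpTo T (t₁ n) (t₂ n) := by
    intro n k
    have hbdd : BddAbove (Set.range fun i =>
        max (min (t₁ n (i + 1)) T - min (t₁ n i) T) (min (t₂ n (i + 1)) T - min (t₂ n i) T)) := by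
      refine ⟨T, ?_⟩
      rintro _ ⟨i, rfl⟩
      have e1 : min (t₁ n (i + 1)) T ≤ T := min_le_right _ _
      have e2 : (0:ℝ) ≤ min (t₁ n i) T := le_min (ht₁0 n i) hT.le
      have e3 : min (t₂ n (i + 1)) T ≤ T := min_le_right _ _
      have e4 : (0:ℝ) ≤ min (t₂ n i) T := le_min (ht₂0 n i) hT.le
      exact max_le (by linarith) (by linarith)
    exact le_trans (le_max_right _ _) (le_ciSup hbdd k)
  -- interval bridging
  have hseg : ∀ (t : ℕ → ℝ), StrictMono t → (∀ i, 0 ≤ t i) →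
      ∀ (i : ℕ) (s m : ℝ), t i < s → s ≤ t (i + 1) → s < T →
      (∀ k, min (t (k + 1)) T - min (t k) T ≤ m) → m < T - s →
      t (i + 1) ≤ T ∧ t (i + 1) ≤ s + m ∧ s - m ≤ t i := by
    intro t hm ht0 i s m h1 h2 hsT hmle hmT
    have hA : t (i + 1) ≤ T := by
      by_contra hc
      push_neg at hc
      have h4 := hmle i
      rw [min_eq_right hc.le, min_eq_left (le_trans h1.le (le_of_lt hsT))] at h4
      linarith
    have h4 := hmle i
    rw [min_eq_left hA, min_eq_left (le_trans h1.le hsT.le)] at h4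
    exact ⟨hA, by linarith, by linarith⟩
  -- increment length bound
  have hlen₁ : ∀ n i, t₁ n (i + 1) ≤ T → t₁ n (i + 1) - t₁ n i ≤ meshUpTo T (t₁ n) (t₂ n) := by
    intro n i hi
    have h4 := hmle₁ n i
    rw [min_eq_left hi, min_eq_left (le_trans ((hmono₁ n).monotone (Nat.le_succ i)) hi)] at h4
    exact h4
  have hlen₂ : ∀ n i, t₂ n (i + 1) ≤ T → t₂ n (i + 1) - t₂ n i ≤ meshUpTo T (t₁ n) (t₂ n) := by
    intro n i hi
    have h4 := hmle₂ n i
    rw [min_eq_left hi, min_eq_left (le_trans ((hmono₂ n).monotone (Nat.le_succ i)) hi)] at h4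
    exact h4
  -- Claim 1 : pointwise convergence
  have htend : ∀ s ∈ S', Filter.Tendsto (fun n => φ n s) Filter.atTop
      (nhds (f (x₁ s - L₁ s, x₂ s - L₂ s))) := by
    intro s hs
    have hs0 : 0 < s := hs.1.1
    have hsT : s < T := hS'T s hs
    have hev : ∀ᶠ n in Filter.atTop, meshUpTo T (t₁ n) (t₂ n) < T - s :=
      hmesh.eventually_lt_const (by linarith)
    have hsegev₁ : ∀ᶠ n in Filter.atTop,
        t₁ n (I₁ n s + 1) ≤ T ∧ t₁ n (I₁ n s + 1) ≤ s + meshUpTo T (t₁ n) (t₂ n) ∧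
          s - meshUpTo T (t₁ n) (t₂ n) ≤ t₁ n (I₁ n s) := by
      filter_upwards [hev] with n hn
      exact hseg (t₁ n) (hmono₁ n) (ht₁0 n) (I₁ n s) s _ (hI₁ n s hs0).1 (hI₁ n s hs0).2
        hsT (hmle₁ n) hn
    have hsegev₂ : ∀ᶠ n in Filter.atTop,
        t₂ n (I₂ n s + 1) ≤ T ∧ t₂ n (I₂ n s + 1) ≤ s + meshUpTo T (t₁ n) (t₂ n) ∧
          s - meshUpTo T (t₁ n) (t₂ n) ≤ t₂ n (I₂ n s) := by
      filter_upwards [hev] with n hn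
      exact hseg (t₂ n) (hmono₂ n) (ht₂0 n) (I₂ n s) s _ (hI₂ n s hs0).1 (hI₂ n s hs0).2
        hsT (hmle₂ n) hn
    have hadd : Filter.Tendsto (fun n => s + meshUpTo T (t₁ n) (t₂ n)) Filter.atTop (nhds s) := by
      simpa using (tendsto_const_nhds (x := s) (f := Filter.atTop (α := ℕ))).add hmesh
    have hsub : Filter.Tendsto (fun n => s - meshUpTo T (t₁ n) (t₂ n)) Filter.atTop (nhds s) := by
      simpa using (tendsto_const_nhds (x := s) (f := Filter.atTop (α := ℕ))).sub hmesh
    have ha₁ : Filter.Tendsto (fun n => t₁ n (I₁ n s + 1)) Filter.atTop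
        (nhdsWithin s (Set.Ici s)) := by
      refine tendsto_nhdsWithin_of_tendsto_nhds_of_eventually_within _ ?_
        (Filter.Eventually.of_forall fun n => (hI₁ n s hs0).2)
      refine tendsto_of_tendsto_of_tendsto_of_le_of_le' tendsto_const_nhds hadd
        (Filter.Eventually.of_forall fun n => (hI₁ n s hs0).2) ?_
      filter_upwards [hsegev₁] with n hn using hn.2.1
    have hb₁ : Filter.Tendsto (fun n => t₁ n (I₁ n s)) Filter.atTop
        (nhdsWithin s (Set.Iio s)) := by
      refine tendsto_nhdsWithin_of_tendsto_nhds_of_eventually_within _ ?_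
        (Filter.Eventually.of_forall fun n => (hI₁ n s hs0).1)
      refine tendsto_of_tendsto_of_tendsto_of_le_of_le' hsub tendsto_const_nhds ?_
        (Filter.Eventually.of_forall fun n => (hI₁ n s hs0).1.le)
      filter_upwards [hsegev₁] with n hn using hn.2.2
    have ha₂ : Filter.Tendsto (fun n => t₂ n (I₂ n s + 1)) Filter.atTop
        (nhdsWithin s (Set.Ici s)) := by
      refine tendsto_nhdsWithin_of_tendsto_nhds_of_eventually_within _ ?_
        (Filter.Eventually.of_forall fun n => (hI₂ n s hs0).2)
      refine tendsto_of_tendsto_of_tendsto_of_le_of_le' tendsto_const_nhds hadd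
        (Filter.Eventually.of_forall fun n => (hI₂ n s hs0).2) ?_
      filter_upwards [hsegev₂] with n hn using hn.2.1
    have hb₂ : Filter.Tendsto (fun n => t₂ n (I₂ n s)) Filter.atTop
        (nhdsWithin s (Set.Iio s)) := by
      refine tendsto_nhdsWithin_of_tendsto_nhds_of_eventually_within _ ?_
        (Filter.Eventually.of_forall fun n => (hI₂ n s hs0).1)
      refine tendsto_of_tendsto_of_tendsto_of_le_of_le' hsub tendsto_const_nhds ?_
        (Filter.Eventually.of_forall fun n => (hI₂ n s hs0).1.le)
      filter_upwards [hsegev₂] with n hn using hn.2.2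
    have hc₁ : Filter.Tendsto (fun n => x₁ (t₁ n (I₁ n s + 1)) - x₁ (t₁ n (I₁ n s)))
        Filter.atTop (nhds (x₁ s - L₁ s)) :=
      ((hrc₁ s hs0.le).comp ha₁).sub ((hll₁ s hs0).comp hb₁)
    have hc₂ : Filter.Tendsto (fun n => x₂ (t₂ n (I₂ n s + 1)) - x₂ (t₂ n (I₂ n s)))
        Filter.atTop (nhds (x₂ s - L₂ s)) :=
      ((hrc₂ s hs0.le).comp ha₂).sub ((hll₂ s hs0).comp hb₂)
    exact (hf.tendsto _).comp (hc₁.prodMk_nhds hc₂)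
  -- Claim 2 : eventual equality
  have heq : ∀ᶠ n in Filter.atTop,
      hySum (t₁ n) (t₂ n) T
        (fun i j => f (x₁ (t₁ n (i + 1)) - x₁ (t₁ n i), x₂ (t₂ n (j + 1)) - x₂ (t₂ n j)))
      = ∑ s ∈ hS'fin.toFinset, φ n s := by
    filter_upwards [hmesh.eventually_lt_const hδ0] with n hn
    -- basic facts for matched pairs
    have hsegS : ∀ s ∈ S',
        t₁ n (I₁ n s + 1) ≤ T ∧ t₂ n (I₂ n s + 1) ≤ T := by
      intro s hs
      have hs0 : 0 < s := hs.1.1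
      have hmT : meshUpTo T (t₁ n) (t₂ n) < T - s :=
        lt_of_lt_of_le hn (le_trans hδle₃ (hδ₃ _ ⟨s, hs, rfl⟩))
      exact ⟨(hseg (t₁ n) (hmono₁ n) (ht₁0 n) (I₁ n s) s _ (hI₁ n s hs0).1 (hI₁ n s hs0).2
          (hS'T s hs) (hmle₁ n) hmT).1,
        (hseg (t₂ n) (hmono₂ n) (ht₂0 n) (I₂ n s) s _ (hI₂ n s hs0).1 (hI₂ n s hs0).2
          (hS'T s hs) (hmle₂ n) hmT).1⟩
    have hcondS : ∀ s ∈ S',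
        (max (t₁ n (I₁ n s + 1)) (t₂ n (I₂ n s + 1)) ≤ T ∧
          (Set.Ioc (t₁ n (I₁ n s)) (t₁ n (I₁ n s + 1)) ∩
            Set.Ioc (t₂ n (I₂ n s)) (t₂ n (I₂ n s + 1))).Nonempty) := by
      intro s hs
      have hs0 : 0 < s := hs.1.1
      exact ⟨max_le (hsegS s hs).1 (hsegS s hs).2,
        ⟨s, ⟨(hI₁ n s hs0).1, (hI₁ n s hs0).2⟩, ⟨(hI₂ n s hs0).1, (hI₂ n s hs0).2⟩⟩⟩
    set P : Finset (ℕ × ℕ) := hS'fin.toFinset.image (fun s => (I₁ n s, I₂ n s)) with hPdef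
    have hzero : ∀ i j, (i, j) ∉ P →
        (if max (t₁ n (i + 1)) (t₂ n (j + 1)) ≤ T ∧
            (Set.Ioc (t₁ n i) (t₁ n (i + 1)) ∩ Set.Ioc (t₂ n j) (t₂ n (j + 1))).Nonempty
          then f (x₁ (t₁ n (i + 1)) - x₁ (t₁ n i), x₂ (t₂ n (j + 1)) - x₂ (t₂ n j)) else 0) = 0 := by
      intro i j hP
      by_cases hcond : max (t₁ n (i + 1)) (t₂ n (j + 1)) ≤ T ∧
          (Set.Ioc (t₁ n i) (t₁ n (i + 1)) ∩ Set.Ioc (t₂ n j) (t₂ n (j + 1))).Nonempty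
      · rw [if_pos hcond]
        obtain ⟨hmax, w, hw₁, hw₂⟩ := hcond
        have hvT₁ : t₁ n (i + 1) ≤ T := le_trans (le_max_left _ _) hmax
        have hvT₂ : t₂ n (j + 1) ≤ T := le_trans (le_max_right _ _) hmax
        have huv₁ : t₁ n i < t₁ n (i + 1) := (hmono₁ n) (Nat.lt_succ_self i)
        have huv₂ : t₂ n j < t₂ n (j + 1) := (hmono₂ n) (Nat.lt_succ_self j)
        have hl₁ : t₁ n (i + 1) - t₁ n i < δ := lt_of_le_of_lt (hlen₁ n i hvT₁) hn
        have hl₂ : t₂ n (j + 1) - t₂ n j < δ := lt_of_le_of_lt (hlen₂ n j hvT₂) hn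
        obtain ⟨s₁, hs₁u, hs₁v, hbd₁⟩ := hδ₁ (t₁ n i) (t₁ n (i + 1)) (ht₁0 n i) huv₁ hvT₁
          (lt_of_lt_of_le hl₁ hδle₁)
        obtain ⟨s₂, hs₂u, hs₂v, hbd₂⟩ := hδ₂ (t₂ n j) (t₂ n (j + 1)) (ht₂0 n j) huv₂ hvT₂
          (lt_of_lt_of_le hl₂ hδle₂)
        have hs₁0 : 0 < s₁ := lt_of_le_of_lt (ht₁0 n i) hs₁u
        have hs₂0 : 0 < s₂ := lt_of_le_of_lt (ht₂0 n j) hs₂u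
        have hs₁T : s₁ ≤ T := le_trans hs₁v hvT₁
        have hs₂T : s₂ ≤ T := le_trans hs₂v hvT₂
        by_cases hbig : θ ≤ |x₁ s₁ - L₁ s₁| ∧ θ ≤ |x₂ s₂ - L₂ s₂|
        · exfalso
          have hss : s₁ = s₂ := by
            by_contra hne
            have h5 := hγ s₁ (Set.mem_union_left _ ⟨hs₁0, hs₁T, hbig.1⟩)
              s₂ (Set.mem_union_right _ ⟨hs₂0, hs₂T, hbig.2⟩) hne
            simp only [Set.mem_Ioc] at hw₁ hw₂
            have e1 : |s₁ - w| ≤ t₁ n (i + 1) - t₁ n i :=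
              abs_le.2 ⟨by linarith, by linarith⟩
            have e2 : |w - s₂| ≤ t₂ n (j + 1) - t₂ n j :=
              abs_le.2 ⟨by linarith, by linarith⟩
            have e3 : |s₁ - s₂| ≤ |s₁ - w| + |w - s₂| := abs_sub_le _ _ _
            linarith
          subst hss
          have hsS' : s₁ ∈ S' := ⟨⟨hs₁0, hs₁T⟩, hbig.1, hbig.2⟩
          have hi : I₁ n s₁ = i :=
            idx_unique (hmono₁ n) (hI₁ n s₁ hs₁0).1 (hI₁ n s₁ hs₁0).2 hs₁u hs₁v
          have hj : I₂ n s₁ = j :=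
            idx_unique (hmono₂ n) (hI₂ n s₁ hs₁0).1 (hI₂ n s₁ hs₁0).2 hs₂u hs₂v
          exact hP (Finset.mem_image.2 ⟨s₁, hS'fin.mem_toFinset.2 hsS', by rw [hi, hj]⟩)
        · apply hf0
          have hA2C := hΔ₁b s₁ hs₁0 hs₁T
          have hB2C := hΔ₂b s₂ hs₂0 hs₂T
          have hA0 : (0:ℝ) ≤ |x₁ s₁ - L₁ s₁| := abs_nonneg _
          have hB0 : (0:ℝ) ≤ |x₂ s₂ - L₂ s₂| := abs_nonneg _
          have hAB : |x₁ s₁ - L₁ s₁| * |x₂ s₂ - L₂ s₂| < ρ / 2 := by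
            rcases not_and_or.1 hbig with hb | hb
            · rw [not_le] at hb
              calc |x₁ s₁ - L₁ s₁| * |x₂ s₂ - L₂ s₂|
                  ≤ |x₁ s₁ - L₁ s₁| * (2 * C) := mul_le_mul_of_nonneg_left hB2C hA0
                _ < θ * (2 * C) := mul_lt_mul_of_pos_right hb (by linarith)
                _ = ρ / 2 := hθ2C
            · rw [not_le] at hb
              calc |x₁ s₁ - L₁ s₁| * |x₂ s₂ - L₂ s₂|
                  ≤ (2 * C) * |x₂ s₂ - L₂ s₂| := mul_le_mul_of_nonneg_right hA2C hB0
                _ < (2 * C) * θ := mul_lt_mul_of_pos_left hb (by linarith)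
                _ = ρ / 2 := by rw [mul_comm]; exact hθ2C
          have hprod : |x₁ (t₁ n (i + 1)) - x₁ (t₁ n i)| * |x₂ (t₂ n (j + 1)) - x₂ (t₂ n j)|
              ≤ (2 * ε + |x₁ s₁ - L₁ s₁|) * (2 * ε + |x₂ s₂ - L₂ s₂|) :=
            mul_le_mul hbd₁ hbd₂ (abs_nonneg _) (by linarith)
          have k1 : ε * |x₁ s₁ - L₁ s₁| ≤ 2 * (ε * C) := by nlinarith
          have k2 : ε * |x₂ s₂ - L₂ s₂| ≤ 2 * (ε * C) := by nlinarith
          have k3 : ε * ε ≤ ε := by nlinarith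
          have hexp : (2 * ε + |x₁ s₁ - L₁ s₁|) * (2 * ε + |x₂ s₂ - L₂ s₂|)
              = 4 * (ε * ε) + 2 * (ε * |x₂ s₂ - L₂ s₂|) + 2 * (ε * |x₁ s₁ - L₁ s₁|)
                + |x₁ s₁ - L₁ s₁| * |x₂ s₂ - L₂ s₂| := by ring
          have hε2' : 8 * ε + 16 * (ε * C) ≤ ρ := by
            have e : ε * (8 * (1 + 2 * C)) = 8 * ε + 16 * (ε * C) := by ring
            linarith
          rw [abs_mul]
          linarith
      · exact if_neg hcond
    -- injectivity of the matched-pair map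
    have hinj : ∀ s ∈ hS'fin.toFinset, ∀ s' ∈ hS'fin.toFinset,
        (fun s => (I₁ n s, I₂ n s)) s = (fun s => (I₁ n s, I₂ n s)) s' → s = s' := by
      intro s hs s' hs' hpair
      have hsS := hS'fin.mem_toFinset.1 hs
      have hs'S := hS'fin.mem_toFinset.1 hs'
      by_contra hne
      have hi : I₁ n s = I₁ n s' := congrArg Prod.fst hpair
      have h1 := hI₁ n s hsS.1.1
      have h2 := hI₁ n s' hs'S.1.1
      rw [← hi] at h2
      have hvT := (hsegS s hsS).1
      have hlenb := hlen₁ n (I₁ n s) hvT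
      have e1 : |s - s'| ≤ t₁ n (I₁ n s + 1) - t₁ n (I₁ n s) :=
        abs_le.2 ⟨by linarith [h1.1, h1.2, h2.1, h2.2], by linarith [h1.1, h1.2, h2.1, h2.2]⟩
      have h5 := hγ s (Set.mem_union_left _ (hS'sub₁ hsS)) s'
        (Set.mem_union_left _ (hS'sub₁ hs'S)) hne
      linarith
    -- compute the sum
    simp only [hySum]
    rw [tsum_tsum_eq_sum _ P hzero, hPdef, Finset.sum_image hinj]
    refine Finset.sum_congr rfl ?_
    intro s hs
    rw [if_pos (hcondS s (hS'fin.mem_toFinset.1 hs))]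
  -- final assembly
  have h2 : Filter.Tendsto (fun n => ∑ s ∈ hS'fin.toFinset, φ n s) Filter.atTop
      (nhds (∑ s ∈ hS'fin.toFinset, f (x₁ s - L₁ s, x₂ s - L₂ s))) :=
    tendsto_finset_sum _ (fun s hs => htend s (hS'fin.mem_toFinset.1 hs))
  exact Filter.Tendsto.congr' (Filter.EventuallyEq.symm heq) h2
end

section
/- Let T > 0 and let p₁, p₂ > 0 with p₁ + p₂ < 2. Let (t_i^{(1)})_{i≥0}, (t_i^{(2)})_{i≥0} be an observation scheme pair and let δ > 0 be such that the mesh up to T is at most δ and 2δ < T. Then Σ_{i,j≥1 : t_i^{(1)} ∨ t_j^{(2)} ≤ T, I_i^{(1)} ∩ I_j^{(2)} ≠ ∅} |I_i^{(1)}|^{p₁/2} |I_j^{(2)}|^{p₂/2} ≥ δ^{(p₁+p₂)/2 − 1} · (T − 2δ). In particular, for any sequence of observation scheme pairs whose meshes up to T tend to 0, these sums tend to +∞. -/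
open scoped Classical

open Filter Set MeasureTheory

lemma pt_ineq {p₁ p₂ δ x y m : ℝ} (hp₁ : 0 < p₁) (hp₂ : 0 < p₂) (hp : p₁ + p₂ < 2)
    (hδ : 0 < δ) (hm : 0 < m) (hmx : m ≤ x) (hmy : m ≤ y) (hx : x ≤ δ) (hy : y ≤ δ) :
    δ ^ ((p₁ + p₂) / 2 - 1) * m ≤ x ^ (p₁ / 2) * y ^ (p₂ / 2) := by
  have h1 : m ^ (p₁ / 2) ≤ x ^ (p₁ / 2) := Real.rpow_le_rpow hm.le hmx (by positivity)
  have h2 : m ^ (p₂ / 2) ≤ y ^ (p₂ / 2) := Real.rpow_le_rpow hm.le hmy (by positivity)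
  have e : m ^ (p₁ / 2) * m ^ (p₂ / 2) = m ^ ((p₁ + p₂) / 2 - 1) * m ^ (1 : ℝ) := by
    rw [← Real.rpow_add hm, ← Real.rpow_add hm]; ring_nf
  have hδm : δ ^ ((p₁ + p₂) / 2 - 1) ≤ m ^ ((p₁ + p₂) / 2 - 1) :=
    Real.rpow_le_rpow_of_nonpos hm (hmx.trans hx) (by linarith)
  calc δ ^ ((p₁ + p₂) / 2 - 1) * m ≤ m ^ ((p₁ + p₂) / 2 - 1) * m :=
        mul_le_mul_of_nonneg_right hδm hm.le
    _ = m ^ (p₁ / 2) * m ^ (p₂ / 2) := by rw [e, Real.rpow_one]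
    _ ≤ x ^ (p₁ / 2) * y ^ (p₂ / 2) := by
        apply mul_le_mul h1 h2 (Real.rpow_nonneg hm.le _) (Real.rpow_nonneg (hm.le.trans hmx) _)

lemma mesh_bdd {T : ℝ} (hT : 0 ≤ T) {t₁ t₂ : ℕ → ℝ} (h₁ : ∀ i, 0 ≤ t₁ i) (h₂ : ∀ i, 0 ≤ t₂ i) :
    BddAbove (Set.range fun i : ℕ =>
      max (min (t₁ (i + 1)) T - min (t₁ i) T) (min (t₂ (i + 1)) T - min (t₂ i) T)) := by
  refine ⟨T, ?_⟩
  rintro _ ⟨i, rfl⟩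
  have a1 : 0 ≤ min (t₁ i) T := le_min (h₁ i) hT
  have a2 : 0 ≤ min (t₂ i) T := le_min (h₂ i) hT
  have b1 : min (t₁ (i + 1)) T ≤ T := min_le_right _ _
  have b2 : min (t₂ (i + 1)) T ≤ T := min_le_right _ _
  exact max_le (by linarith) (by linarith)

lemma hy_key (T p₁ p₂ δ : ℝ) (hT : 0 < T) (hp₁ : 0 < p₁) (hp₂ : 0 < p₂)
    (hp : p₁ + p₂ < 2) (hδ : 0 < δ) (hδT : 2 * δ < T)
    (t₁ t₂ : ℕ → ℝ) (hmono₁ : StrictMono t₁) (hmono₂ : StrictMono t₂)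
    (h0₁ : t₁ 0 = 0) (h0₂ : t₂ 0 = 0)
    (hinf₁ : Filter.Tendsto t₁ Filter.atTop Filter.atTop)
    (hinf₂ : Filter.Tendsto t₂ Filter.atTop Filter.atTop)
    (hmesh : meshUpTo T t₁ t₂ ≤ δ) :
    δ ^ ((p₁ + p₂) / 2 - 1) * (T - 2 * δ) ≤
      hySum t₁ t₂ T
        (fun i j => (t₁ (i + 1) - t₁ i) ^ (p₁ / 2) * (t₂ (j + 1) - t₂ j) ^ (p₂ / 2)) := by
  have hnn₁ : ∀ i, 0 ≤ t₁ i := fun i => h0₁ ▸ hmono₁.monotone (Nat.zero_le i)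
  have hnn₂ : ∀ i, 0 ≤ t₂ i := fun i => h0₂ ▸ hmono₂.monotone (Nat.zero_le i)
  have hbdd := mesh_bdd hT.le hnn₁ hnn₂
  have hM : ∀ i, min (t₁ (i + 1)) T - min (t₁ i) T ≤ δ ∧
      min (t₂ (i + 1)) T - min (t₂ i) T ≤ δ := by
    intro i
    have h := (le_ciSup hbdd i).trans hmesh
    exact ⟨(le_max_left _ _).trans h, (le_max_right _ _).trans h⟩
  -- per-interval length bound when the right endpoint is below T
  have hstep : ∀ (t : ℕ → ℝ), StrictMono t →
      (∀ i, min (t (i + 1)) T - min (t i) T ≤ δ) →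
      ∀ i, t (i + 1) ≤ T → t (i + 1) - t i ≤ δ := by
    intro t ht hMt i hi
    have h := hMt i
    rw [min_eq_left hi, min_eq_left (((ht (Nat.lt_succ_self i)).le).trans hi)] at h
    exact h
  have hstep₁ := hstep t₁ hmono₁ (fun i => (hM i).1)
  have hstep₂ := hstep t₂ hmono₂ (fun i => (hM i).2)
  -- locate x in a grid
  have find : ∀ (t : ℕ → ℝ), StrictMono t → t 0 = 0 →
      Filter.Tendsto t Filter.atTop Filter.atTop →
      (∀ i, min (t (i + 1)) T - min (t i) T ≤ δ) →
      ∀ x, 0 < x → x ≤ T - δ → ∃ i, t i < x ∧ x ≤ t (i + 1) ∧ t (i + 1) ≤ T := by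
    intro t ht ht0 htop hMt x hx hxT
    have hex : ∃ n, x ≤ t n := (htop.eventually (eventually_ge_atTop x)).exists
    have hk : x ≤ t (Nat.find hex) := Nat.find_spec hex
    have hk0 : Nat.find hex ≠ 0 := by
      intro h; rw [h, ht0] at hk; linarith
    obtain ⟨i, hki⟩ := Nat.exists_eq_succ_of_ne_zero hk0
    rw [hki] at hk
    have hlt : t i < x := by
      by_contra h; push_neg at h
      exact Nat.find_min hex (by omega) h
    refine ⟨i, hlt, hk, ?_⟩
    by_contra hTlt; push_neg at hTlt
    have h := hMt i
    rw [min_eq_left (by linarith : t i ≤ T), min_eq_right hTlt.le] at h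
    linarith
  obtain ⟨N₁, hN₁⟩ := Filter.eventually_atTop.mp (hinf₁.eventually (Filter.eventually_gt_atTop T))
  obtain ⟨N₂, hN₂⟩ := Filter.eventually_atTop.mp (hinf₂.eventually (Filter.eventually_gt_atTop T))
  set P : ℕ → ℕ → Prop := fun i j => max (t₁ (i + 1)) (t₂ (j + 1)) ≤ T ∧
      (Set.Ioc (t₁ i) (t₁ (i + 1)) ∩ Set.Ioc (t₂ j) (t₂ (j + 1))).Nonempty with hP
  set F : ℕ → ℕ → ℝ := fun i j => if P i j then
      (t₁ (i + 1) - t₁ i) ^ (p₁ / 2) * (t₂ (j + 1) - t₂ j) ^ (p₂ / 2) else 0 with hF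
  have hFnot : ∀ i j, ¬ P i j → F i j = 0 := fun i j h => if_neg h
  have hP₁ : ∀ i j, N₁ ≤ i + 1 → ¬ P i j := by
    rintro i j hi ⟨hle, -⟩
    have := hN₁ _ hi
    have := le_max_left (t₁ (i + 1)) (t₂ (j + 1))
    linarith
  have hP₂ : ∀ i j, N₂ ≤ j + 1 → ¬ P i j := by
    rintro i j hj ⟨hle, -⟩
    have := hN₂ _ hj
    have := le_max_right (t₁ (i + 1)) (t₂ (j + 1))
    linarith
  have hsum : hySum t₁ t₂ T
      (fun i j => (t₁ (i + 1) - t₁ i) ^ (p₁ / 2) * (t₂ (j + 1) - t₂ j) ^ (p₂ / 2)) =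
      ∑ i ∈ Finset.range (N₁ + 1), ∑ j ∈ Finset.range (N₂ + 1), F i j := by
    unfold hySum
    have inner : ∀ i, (∑' j, F i j) = ∑ j ∈ Finset.range (N₂ + 1), F i j := by
      intro i
      refine tsum_eq_sum fun j hj => ?_
      simp only [Finset.mem_range, not_lt] at hj
      exact hFnot i j (hP₂ i j (by omega))
    calc (∑' (i : ℕ) (j : ℕ), F i j) = ∑' (i : ℕ), ∑ j ∈ Finset.range (N₂ + 1), F i j := by
          exact tsum_congr inner
      _ = ∑ i ∈ Finset.range (N₁ + 1), ∑ j ∈ Finset.range (N₂ + 1), F i j := by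
          refine tsum_eq_sum fun i hi => ?_
          simp only [Finset.mem_range, not_lt] at hi
          exact Finset.sum_eq_zero fun j _ => hFnot i j (hP₁ i j (by omega))
  set S : Finset (ℕ × ℕ) := Finset.range (N₁ + 1) ×ˢ Finset.range (N₂ + 1) with hS
  set B : ℕ × ℕ → Set ℝ := fun p => if P p.1 p.2 then
      Set.Ioc (max (t₁ p.1) (t₂ p.2)) (min (t₁ (p.1 + 1)) (t₂ (p.2 + 1))) else ∅ with hB
  have hvol : ∀ p : ℕ × ℕ, volume (B p) ≠ ⊤ := by
    intro p
    by_cases h : P p.1 p.2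
    · simp only [hB, if_pos h, Real.volume_Ioc]; exact ENNReal.ofReal_ne_top
    · simp [hB, if_neg h]
  have hcov : Set.Ioc 0 (T - δ) ⊆ ⋃ p ∈ S, B p := by
    rintro x ⟨hx0, hxT⟩
    obtain ⟨i, h1, h2, h3⟩ := find t₁ hmono₁ h0₁ hinf₁ (fun i => (hM i).1) x hx0 hxT
    obtain ⟨j, h4, h5, h6⟩ := find t₂ hmono₂ h0₂ hinf₂ (fun i => (hM i).2) x hx0 hxT
    have hPij : P i j := ⟨max_le h3 h6, ⟨x, ⟨h1, h2⟩, ⟨h4, h5⟩⟩⟩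
    have hiN : i + 1 < N₁ + 1 := by
      by_contra h; push_neg at h
      exact absurd h3 (not_le.mpr (hN₁ _ (by omega)))
    have hjN : j + 1 < N₂ + 1 := by
      by_contra h; push_neg at h
      exact absurd h6 (not_le.mpr (hN₂ _ (by omega)))
    refine Set.mem_biUnion (show (i, j) ∈ S from ?_) ?_
    · simp only [hS, Finset.mem_product, Finset.mem_range]
      exact ⟨by omega, by omega⟩
    · simp only [hB, if_pos hPij]
      exact ⟨max_lt h1 h4, le_min h2 h5⟩
  have hμ : T - δ ≤ ∑ p ∈ S, (volume (B p)).toReal := by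
    have h1 : volume (Set.Ioc 0 (T - δ)) ≤ ∑ p ∈ S, volume (B p) :=
      (measure_mono hcov).trans (measure_biUnion_finset_le S B)
    have h2 : (∑ p ∈ S, volume (B p)) ≠ ⊤ :=
      (ENNReal.sum_lt_top.mpr fun p _ => (hvol p).lt_top).ne
    have h3 : (volume (Set.Ioc 0 (T - δ))).toReal = T - δ := by
      rw [Real.volume_Ioc, sub_zero, ENNReal.toReal_ofReal (by linarith)]
    calc T - δ = (volume (Set.Ioc 0 (T - δ))).toReal := h3.symm
      _ ≤ (∑ p ∈ S, volume (B p)).toReal :=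
          (ENNReal.toReal_le_toReal (by rw [Real.volume_Ioc]; exact ENNReal.ofReal_ne_top) h2).mpr h1
      _ = ∑ p ∈ S, (volume (B p)).toReal := ENNReal.toReal_sum fun p _ => hvol p
  have hpt : ∀ p ∈ S, δ ^ ((p₁ + p₂) / 2 - 1) * (volume (B p)).toReal ≤ F p.1 p.2 := by
    rintro ⟨i, j⟩ -
    by_cases h : P i j
    · have hne := h.2
      rw [Set.Ioc_inter_Ioc] at hne
      have hmlt : max (t₁ i) (t₂ j) < min (t₁ (i + 1)) (t₂ (j + 1)) :=
        Set.nonempty_Ioc.mp hne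
      set m : ℝ := min (t₁ (i + 1)) (t₂ (j + 1)) - max (t₁ i) (t₂ j) with hmdef
      have hm : 0 < m := sub_pos.mpr hmlt
      have hvolB : (volume (B (i, j))).toReal = m := by
        simp only [hB, if_pos h, Real.volume_Ioc]
        exact ENNReal.toReal_ofReal hm.le
      have hFv : F i j = (t₁ (i + 1) - t₁ i) ^ (p₁ / 2) * (t₂ (j + 1) - t₂ j) ^ (p₂ / 2) :=
        if_pos h
      have hb₁ : t₁ (i + 1) ≤ T := (le_max_left _ _).trans h.1
      have hb₂ : t₂ (j + 1) ≤ T := (le_max_right _ _).trans h.1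
      have hmx : m ≤ t₁ (i + 1) - t₁ i :=
        sub_le_sub (min_le_left _ _) (le_max_left _ _)
      have hmy : m ≤ t₂ (j + 1) - t₂ j :=
        sub_le_sub (min_le_right _ _) (le_max_right _ _)
      rw [hvolB, hFv]
      exact pt_ineq hp₁ hp₂ hp hδ hm hmx hmy (hstep₁ i hb₁) (hstep₂ j hb₂)
    · simp [hB, if_neg h, hFnot i j h]
  have hδpow : 0 < δ ^ ((p₁ + p₂) / 2 - 1) := Real.rpow_pos_of_pos hδ _
  have hsum2 : ∑ p ∈ S, F p.1 p.2 =
      ∑ i ∈ Finset.range (N₁ + 1), ∑ j ∈ Finset.range (N₂ + 1), F i j :=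
    Finset.sum_product _ _ _
  rw [hsum, ← hsum2]
  calc δ ^ ((p₁ + p₂) / 2 - 1) * (T - 2 * δ)
      ≤ δ ^ ((p₁ + p₂) / 2 - 1) * (T - δ) := by nlinarith
    _ ≤ δ ^ ((p₁ + p₂) / 2 - 1) * ∑ p ∈ S, (volume (B p)).toReal :=
        mul_le_mul_of_nonneg_left hμ hδpow.le
    _ = ∑ p ∈ S, δ ^ ((p₁ + p₂) / 2 - 1) * (volume (B p)).toReal := Finset.mul_sum _ _ _
    _ ≤ ∑ p ∈ S, F p.1 p.2 := Finset.sum_le_sum hpt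

/-- For `p₁, p₂ > 0` with `p₁ + p₂ < 2` and an observation scheme pair with mesh
up to `T` at most `δ` where `2δ < T`, the sum
`Σ_{i,j : t_i^{(1)} ∨ t_j^{(2)} ≤ T, I_i^{(1)} ∩ I_j^{(2)} ≠ ∅} |I_i^{(1)}|^{p₁/2} |I_j^{(2)}|^{p₂/2}`
is at least `δ^{(p₁+p₂)/2−1}(T−2δ)`; in particular, along any sequence of observation scheme
pairs whose meshes up to `T` tend to `0`, these sums tend to `+∞`. -/
theorem stmt_5 (T p₁ p₂ δ : ℝ) (hT : 0 < T) (hp₁ : 0 < p₁) (hp₂ : 0 < p₂)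
    (hp : p₁ + p₂ < 2) (hδ : 0 < δ) (hδT : 2 * δ < T)
    (t₁ t₂ : ℕ → ℝ) (hmono₁ : StrictMono t₁) (hmono₂ : StrictMono t₂)
    (h0₁ : t₁ 0 = 0) (h0₂ : t₂ 0 = 0)
    (hinf₁ : Filter.Tendsto t₁ Filter.atTop Filter.atTop)
    (hinf₂ : Filter.Tendsto t₂ Filter.atTop Filter.atTop)
    (hmesh : meshUpTo T t₁ t₂ ≤ δ) :
    δ ^ ((p₁ + p₂) / 2 - 1) * (T - 2 * δ) ≤
      hySum t₁ t₂ T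
        (fun i j => (t₁ (i + 1) - t₁ i) ^ (p₁ / 2) * (t₂ (j + 1) - t₂ j) ^ (p₂ / 2)) ∧
    ∀ u₁ u₂ : ℕ → ℕ → ℝ,
      (∀ n, StrictMono (u₁ n)) → (∀ n, StrictMono (u₂ n)) →
      (∀ n, u₁ n 0 = 0) → (∀ n, u₂ n 0 = 0) →
      (∀ n, Filter.Tendsto (u₁ n) Filter.atTop Filter.atTop) →
      (∀ n, Filter.Tendsto (u₂ n) Filter.atTop Filter.atTop) →
      Filter.Tendsto (fun n => meshUpTo T (u₁ n) (u₂ n)) Filter.atTop (nhds 0) →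
      Filter.Tendsto
        (fun n => hySum (u₁ n) (u₂ n) T
          (fun i j => (u₁ n (i + 1) - u₁ n i) ^ (p₁ / 2) * (u₂ n (j + 1) - u₂ n j) ^ (p₂ / 2)))
        Filter.atTop Filter.atTop := by
  constructor
  · exact hy_key T p₁ p₂ δ hT hp₁ hp₂ hp hδ hδT t₁ t₂ hmono₁ hmono₂ h0₁ h0₂ hinf₁ hinf₂ hmesh
  · intro u₁ u₂ hm1 hm2 h01 h02 hi1 hi2 hmesh0
    have hpos : ∀ n, 0 < meshUpTo T (u₁ n) (u₂ n) := by
      intro n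
      have hnn₁ : ∀ i, 0 ≤ u₁ n i := fun i => (h01 n) ▸ (hm1 n).monotone (Nat.zero_le i)
      have hnn₂ : ∀ i, 0 ≤ u₂ n i := fun i => (h02 n) ▸ (hm2 n).monotone (Nat.zero_le i)
      have hbdd := mesh_bdd hT.le hnn₁ hnn₂
      have h0 : 0 < min (u₁ n 1) T - min (u₁ n 0) T := by
        have h1 : 0 < u₁ n 1 := (h01 n) ▸ (hm1 n) Nat.zero_lt_one
        rw [h01 n, min_eq_left hT.le, sub_zero]
        exact lt_min h1 hT
      unfold meshUpTo
      exact lt_of_lt_of_le (lt_of_lt_of_le h0 (le_max_left _ _)) (le_ciSup hbdd 0)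
    have hmesh' : Filter.Tendsto (fun n => meshUpTo T (u₁ n) (u₂ n)) Filter.atTop (nhdsWithin 0 (Set.Ioi 0)) :=
      tendsto_nhdsWithin_of_tendsto_nhds_of_eventually_within _ hmesh0 (Filter.Eventually.of_forall hpos)
    have hinvpow : Filter.Tendsto (fun δ' : ℝ => δ' ^ ((p₁ + p₂) / 2 - 1)) (nhdsWithin 0 (Set.Ioi 0)) Filter.atTop := by
      have h1 : Filter.Tendsto (fun δ' : ℝ => (δ'⁻¹) ^ (1 - (p₁ + p₂) / 2)) (nhdsWithin 0 (Set.Ioi 0)) Filter.atTop :=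
        (tendsto_rpow_atTop (by linarith)).comp tendsto_inv_nhdsGT_zero
      refine h1.congr' ?_
      filter_upwards [self_mem_nhdsWithin] with x hx
      rw [Real.inv_rpow (le_of_lt hx), ← Real.rpow_neg (le_of_lt hx)]
      norm_num
    have hconst : Filter.Tendsto (fun δ' : ℝ => T - 2 * δ') (nhdsWithin 0 (Set.Ioi 0)) (nhds T) := by
      have h2 : Filter.Tendsto (fun δ' : ℝ => T - 2 * δ') (nhds (0:ℝ)) (nhds (T - 2 * 0)) :=
        tendsto_const_nhds.sub (tendsto_const_nhds.mul tendsto_id)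
      simpa using h2.mono_left nhdsWithin_le_nhds
    have hf := Filter.Tendsto.atTop_mul_pos hT hinvpow hconst
    have hcomp := hf.comp hmesh'
    have hev : ∀ᶠ n in Filter.atTop, meshUpTo T (u₁ n) (u₂ n) < T / 2 :=
      hmesh0.eventually_lt_const (by linarith)
    refine tendsto_atTop_mono' Filter.atTop ?_ hcomp
    filter_upwards [hev] with n hn
    exact hy_key T p₁ p₂ _ hT hp₁ hp₂ hp (hpos n) (by linarith) _ _ (hm1 n) (hm2 n)
      (h01 n) (h02 n) (hi1 n) (hi2 n) le_rfl
end

section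
/- Let T > 0 and let (t_i^{(1)})_{i≥0}, (t_i^{(2)})_{i≥0} be an observation scheme pair whose mesh up to T is at most δ > 0. Then Σ_{i,j≥1 : t_i^{(1)} ∨ t_j^{(2)} ≤ T, I_i^{(1)} ∩ I_j^{(2)} ≠ ∅} |I_i^{(1)}| · |I_j^{(2)}| ≤ 3 δ T. -/
open scoped Classical

/-- Auxiliary: the summand of the Hayashi–Yoshida sum for lengths. -/
noncomputable def hyF (t₁ t₂ : ℕ → ℝ) (T : ℝ) (i j : ℕ) : ℝ :=
  if max (t₁ (i + 1)) (t₂ (j + 1)) ≤ T ∧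
      (Set.Ioc (t₁ i) (t₁ (i + 1)) ∩ Set.Ioc (t₂ j) (t₂ (j + 1))).Nonempty
  then (t₁ (i + 1) - t₁ i) * (t₂ (j + 1) - t₂ j) else 0

/-- For an observation scheme pair whose mesh up to `T` is at most `δ > 0`,
`Σ_{i,j : t_i^{(1)} ∨ t_j^{(2)} ≤ T, I_i^{(1)} ∩ I_j^{(2)} ≠ ∅} |I_i^{(1)}|·|I_j^{(2)}| ≤ 3δT`. -/
theorem stmt_6 (T δ : ℝ) (hT : 0 < T) (hδ : 0 < δ)
    (t₁ t₂ : ℕ → ℝ) (hmono₁ : StrictMono t₁) (hmono₂ : StrictMono t₂)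
    (h0₁ : t₁ 0 = 0) (h0₂ : t₂ 0 = 0)
    (hinf₁ : Filter.Tendsto t₁ Filter.atTop Filter.atTop)
    (hinf₂ : Filter.Tendsto t₂ Filter.atTop Filter.atTop)
    (hmesh : meshUpTo T t₁ t₂ ≤ δ) :
    hySum t₁ t₂ T (fun i j => (t₁ (i + 1) - t₁ i) * (t₂ (j + 1) - t₂ j)) ≤ 3 * δ * T := by
  obtain ⟨N₁, hN₁⟩ := Filter.eventually_atTop.mp (hinf₁.eventually_gt_atTop T)
  obtain ⟨N₂, hN₂⟩ := Filter.eventually_atTop.mp (hinf₂.eventually_gt_atTop T)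
  have ht₁nn : ∀ n, 0 ≤ t₁ n := fun n => by
    rw [← h0₁]; exact hmono₁.monotone (Nat.zero_le n)
  have ht₂nn : ∀ n, 0 ≤ t₂ n := fun n => by
    rw [← h0₂]; exact hmono₂.monotone (Nat.zero_le n)
  -- boundedness of the mesh family
  have hbdd : BddAbove (Set.range fun i : ℕ =>
      max (min (t₁ (i + 1)) T - min (t₁ i) T) (min (t₂ (i + 1)) T - min (t₂ i) T)) := by
    refine ⟨T, ?_⟩
    rintro x ⟨i, rfl⟩
    have h1 : min (t₁ (i + 1)) T - min (t₁ i) T ≤ T := by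
      have := sub_le_sub (min_le_right (t₁ (i + 1)) T) (le_min (ht₁nn i) hT.le)
      simpa using this
    have h2 : min (t₂ (i + 1)) T - min (t₂ i) T ≤ T := by
      have := sub_le_sub (min_le_right (t₂ (i + 1)) T) (le_min (ht₂nn i) hT.le)
      simpa using this
    exact max_le h1 h2
  have hδ₁ : ∀ n, t₁ (n + 1) ≤ T → t₁ (n + 1) - t₁ n ≤ δ := by
    intro n hn
    have hle : t₁ n ≤ T := le_trans (hmono₁ (Nat.lt_succ_self n)).le hn
    have hsup : max (min (t₁ (n + 1)) T - min (t₁ n) T) (min (t₂ (n + 1)) T - min (t₂ n) T)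
        ≤ meshUpTo T t₁ t₂ := by
      rw [meshUpTo]; exact le_ciSup hbdd n
    calc t₁ (n + 1) - t₁ n = min (t₁ (n + 1)) T - min (t₁ n) T := by
          rw [min_eq_left hn, min_eq_left hle]
      _ ≤ _ := le_trans (le_max_left _ _) hsup
      _ ≤ δ := hmesh
  have hδ₂ : ∀ n, t₂ (n + 1) ≤ T → t₂ (n + 1) - t₂ n ≤ δ := by
    intro n hn
    have hle : t₂ n ≤ T := le_trans (hmono₂ (Nat.lt_succ_self n)).le hn
    have hsup : max (min (t₁ (n + 1)) T - min (t₁ n) T) (min (t₂ (n + 1)) T - min (t₂ n) T)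
        ≤ meshUpTo T t₁ t₂ := by
      rw [meshUpTo]; exact le_ciSup hbdd n
    calc t₂ (n + 1) - t₂ n = min (t₂ (n + 1)) T - min (t₂ n) T := by
          rw [min_eq_left hn, min_eq_left hle]
      _ ≤ _ := le_trans (le_max_right _ _) hsup
      _ ≤ δ := hmesh
  -- vanishing of the summand
  have hf0 : ∀ i j, ¬(t₁ (i + 1) ≤ T ∧ t₂ (j + 1) ≤ T) → hyF t₁ t₂ T i j = 0 := by
    intro i j h
    rw [hyF, if_neg]
    intro hc
    exact h (max_le_iff.mp hc.1)
  -- reduce the double tsum to a finite double sum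
  have hinner : ∀ i, (∑' j, hyF t₁ t₂ T i j) = ∑ j ∈ Finset.range N₂, hyF t₁ t₂ T i j := by
    intro i
    refine tsum_eq_sum ?_
    intro j hj
    apply hf0
    rintro ⟨-, h2⟩
    have hNj : N₂ ≤ j := not_lt.mp (fun h => hj (Finset.mem_range.mpr h))
    exact absurd h2 (not_le.mpr (hN₂ (j + 1) (hNj.trans (Nat.le_succ j))))
  have houter : (∑' i, ∑ j ∈ Finset.range N₂, hyF t₁ t₂ T i j)
      = ∑ i ∈ Finset.range N₁, ∑ j ∈ Finset.range N₂, hyF t₁ t₂ T i j := by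
    refine tsum_eq_sum ?_
    intro i hi
    refine Finset.sum_eq_zero fun j _ => ?_
    apply hf0
    rintro ⟨h1, -⟩
    have hNi : N₁ ≤ i := not_lt.mp (fun h => hi (Finset.mem_range.mpr h))
    exact absurd h1 (not_le.mpr (hN₁ (i + 1) (hNi.trans (Nat.le_succ i))))
  have hrw : (∑' (i : ℕ) (j : ℕ), hyF t₁ t₂ T i j)
      = ∑ i ∈ Finset.range N₁, ∑ j ∈ Finset.range N₂, hyF t₁ t₂ T i j := by
    rw [tsum_congr hinner, houter]
  -- the set of relevant outer indices
  set A := (Finset.range N₁).filter (fun i => t₁ (i + 1) ≤ T) with hA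
  have hsplit : ∑ i ∈ A, (∑ j ∈ Finset.range N₂, hyF t₁ t₂ T i j)
      = ∑ i ∈ Finset.range N₁, ∑ j ∈ Finset.range N₂, hyF t₁ t₂ T i j := by
    apply Finset.sum_filter_of_ne
    intro i _ hne
    by_contra h
    exact hne (Finset.sum_eq_zero fun j _ => hf0 i j (fun hc => h hc.1))
  -- inner bound
  have hJsum : ∀ i, t₁ (i + 1) ≤ T →
      ∑ j ∈ Finset.range N₂, hyF t₁ t₂ T i j
        ≤ (t₁ (i + 1) - t₁ i) * ((t₁ (i + 1) - t₁ i) + 2 * δ) := by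
    intro i hiT
    set J := (Finset.range N₂).filter (fun j => max (t₁ (i + 1)) (t₂ (j + 1)) ≤ T ∧
        (Set.Ioc (t₁ i) (t₁ (i + 1)) ∩ Set.Ioc (t₂ j) (t₂ (j + 1))).Nonempty) with hJ
    have h1 : ∑ j ∈ Finset.range N₂, hyF t₁ t₂ T i j
        = ∑ j ∈ J, (t₁ (i + 1) - t₁ i) * (t₂ (j + 1) - t₂ j) := by
      rw [hJ, Finset.sum_filter]
      rfl
    have hmem : ∀ j ∈ J, t₂ (j + 1) ≤ T ∧
        max (t₁ i) (t₂ j) < min (t₁ (i + 1)) (t₂ (j + 1)) := by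
      intro j hj
      rw [hJ, Finset.mem_filter] at hj
      obtain ⟨-, hmax, hne⟩ := hj
      refine ⟨le_trans (le_max_right _ _) hmax, ?_⟩
      rw [Set.Ioc_inter_Ioc] at hne
      exact Set.nonempty_Ioc.mp hne
    have hJb : ∑ j ∈ J, (t₂ (j + 1) - t₂ j) ≤ (t₁ (i + 1) - t₁ i) + 2 * δ := by
      rcases Finset.eq_empty_or_nonempty J with hJe | hJne
      · rw [hJe, Finset.sum_empty]
        have hp : 0 < t₁ (i + 1) - t₁ i := sub_pos.mpr (hmono₁ (Nat.lt_succ_self i))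
        nlinarith
      · set m := J.min' hJne with hm
        set M := J.max' hJne with hM
        have hmM : m ≤ M := J.min'_le M (J.max'_mem hJne)
        have hmJ : m ∈ J := J.min'_mem hJne
        have hMJ : M ∈ J := J.max'_mem hJne
        have hsub : J ⊆ Finset.Icc m M := fun j hj =>
          Finset.mem_Icc.mpr ⟨J.min'_le j hj, J.le_max' j hj⟩
        have hstep : ∑ j ∈ J, (t₂ (j + 1) - t₂ j) ≤ ∑ j ∈ Finset.Icc m M, (t₂ (j + 1) - t₂ j) :=
          Finset.sum_le_sum_of_subset_of_nonneg hsub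
            (fun j _ _ => (sub_pos.mpr (hmono₂ (Nat.lt_succ_self j))).le)
        have htel : ∑ j ∈ Finset.Icc m M, (t₂ (j + 1) - t₂ j) = t₂ (M + 1) - t₂ m := by
          rw [← Finset.Ico_add_one_right_eq_Icc, Finset.sum_Ico_eq_sub _ (hmM.trans (Nat.le_add_right M 1)),
            Finset.sum_range_sub (fun k => t₂ k), Finset.sum_range_sub (fun k => t₂ k)]
          ring
        obtain ⟨hMT, hMov⟩ := hmem M hMJ
        obtain ⟨hmT, hmov⟩ := hmem m hmJ
        have hMlt : t₂ M < t₁ (i + 1) :=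
          lt_of_le_of_lt (le_max_right (t₁ i) (t₂ M)) (lt_of_lt_of_le hMov (min_le_left _ _))
        have hmgt : t₁ i < t₂ (m + 1) :=
          lt_of_le_of_lt (le_max_left (t₁ i) (t₂ m)) (lt_of_lt_of_le hmov (min_le_right _ _))
        have hMd : t₂ (M + 1) - t₂ M ≤ δ := hδ₂ M hMT
        have hmd : t₂ (m + 1) - t₂ m ≤ δ := hδ₂ m hmT
        calc ∑ j ∈ J, (t₂ (j + 1) - t₂ j) ≤ t₂ (M + 1) - t₂ m := by rw [← htel]; exact hstep
          _ ≤ (t₁ (i + 1) - t₁ i) + 2 * δ := by linarith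
    rw [h1, ← Finset.mul_sum]
    exact mul_le_mul_of_nonneg_left hJb (sub_pos.mpr (hmono₁ (Nat.lt_succ_self i))).le
  -- final finite bound
  have hfin : ∑ i ∈ A, ∑ j ∈ Finset.range N₂, hyF t₁ t₂ T i j ≤ 3 * δ * T := by
    have step1 : ∑ i ∈ A, ∑ j ∈ Finset.range N₂, hyF t₁ t₂ T i j
        ≤ ∑ i ∈ A, (t₁ (i + 1) - t₁ i) * (3 * δ) := by
      apply Finset.sum_le_sum
      intro i hi
      have hiT : t₁ (i + 1) ≤ T := (Finset.mem_filter.mp hi).2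
      refine (hJsum i hiT).trans ?_
      have h0 : 0 ≤ t₁ (i + 1) - t₁ i := (sub_pos.mpr (hmono₁ (Nat.lt_succ_self i))).le
      have hd : t₁ (i + 1) - t₁ i ≤ δ := hδ₁ i hiT
      nlinarith
    have step2 : ∑ i ∈ A, (t₁ (i + 1) - t₁ i) ≤ T := by
      rcases Finset.eq_empty_or_nonempty A with hAe | hAne
      · rw [hAe, Finset.sum_empty]; exact hT.le
      · set M := A.max' hAne with hM
        have hMA : M ∈ A := A.max'_mem hAne
        have hsub : A ⊆ Finset.range (M + 1) := fun i hi =>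
          Finset.mem_range.mpr (Nat.lt_succ_of_le (A.le_max' i hi))
        have hle : ∑ i ∈ A, (t₁ (i + 1) - t₁ i)
            ≤ ∑ i ∈ Finset.range (M + 1), (t₁ (i + 1) - t₁ i) :=
          Finset.sum_le_sum_of_subset_of_nonneg hsub
            (fun j _ _ => (sub_pos.mpr (hmono₁ (Nat.lt_succ_self j))).le)
        rw [Finset.sum_range_sub (fun k => t₁ k)] at hle
        have hMT : t₁ (M + 1) ≤ T := (Finset.mem_filter.mp hMA).2
        rw [h0₁] at hle
        linarith
    calc ∑ i ∈ A, ∑ j ∈ Finset.range N₂, hyF t₁ t₂ T i j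
        ≤ ∑ i ∈ A, (t₁ (i + 1) - t₁ i) * (3 * δ) := step1
      _ = (∑ i ∈ A, (t₁ (i + 1) - t₁ i)) * (3 * δ) := (Finset.sum_mul _ _ _).symm
      _ ≤ T * (3 * δ) := mul_le_mul_of_nonneg_right step2 (by positivity)
      _ = 3 * δ * T := by ring
  have heq : hySum t₁ t₂ T (fun i j => (t₁ (i + 1) - t₁ i) * (t₂ (j + 1) - t₂ j))
      = ∑' (i : ℕ) (j : ℕ), hyF t₁ t₂ T i j := rfl
  rw [heq, hrw, ← hsplit]
  exact hfin
end

section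
/- Let I and J be finite sets, R ⊆ I × J, and N ∈ ℕ such that for every i ∈ I the set {j : (i,j) ∈ R} has at most N elements and for every j ∈ J the set {i : (i,j) ∈ R} has at most N elements. Let p₁, p₂ ≥ 0 with p₁ + p₂ = 2, and let (x_i)_{i∈I} and (y_j)_{j∈J} be real numbers. Then Σ_{(i,j)∈R} |x_i|^{p₁} |y_j|^{p₂} ≤ N · ( Σ_{i∈I} x_i² + Σ_{j∈J} y_j² ). -/
/-! Each term `|x_i|^{p₁} |y_j|^{p₂}` is at most `max(|x_i|, |y_j|)^2 ≤ x_i² + y_j²`, and after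
splitting the sum, every `x_i²` (resp. `y_j²`) occurs at most `N` times. -/

open Finset

lemma Real.rpow_mul_rpow_le_max_rpow_add {a b p q : ℝ} (ha : 0 ≤ a) (hb : 0 ≤ b)
    (hp : 0 ≤ p) (hq : 0 ≤ q) : a ^ p * b ^ q ≤ max a b ^ (p + q) := by
  rw [Real.rpow_add_of_nonneg (ha.trans (le_max_left a b)) hp hq]
  gcongr
  exacts [le_max_left a b, le_max_right a b]

lemma Real.abs_rpow_mul_abs_rpow_le_sq_add_sq {p q : ℝ} (hp : 0 ≤ p) (hq : 0 ≤ q)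
    (hpq : p + q = 2) (a b : ℝ) : |a| ^ p * |b| ^ q ≤ a ^ 2 + b ^ 2 := by
  calc |a| ^ p * |b| ^ q ≤ max |a| |b| ^ (2 : ℝ) := by
        rw [← hpq]; exact Real.rpow_mul_rpow_le_max_rpow_add (abs_nonneg a) (abs_nonneg b) hp hq
    _ = max |a| |b| ^ 2 := Real.rpow_two _
    _ ≤ a ^ 2 + b ^ 2 := by
        rcases max_choice |a| |b| with h | h <;> rw [h, sq_abs] <;>
          linarith [sq_nonneg a, sq_nonneg b]

lemma Finset.sum_comp_le_mul_sum_of_card_fiber_le {α β : Type*} [DecidableEq β]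
    {s : Finset α} {t : Finset β} {g : α → β} (hg : ∀ a ∈ s, g a ∈ t) {N : ℕ}
    (hfiber : ∀ b ∈ t, #{a ∈ s | g a = b} ≤ N) {f : β → ℝ} (hf : ∀ b ∈ t, 0 ≤ f b) :
    ∑ a ∈ s, f (g a) ≤ N * ∑ b ∈ t, f b := by
  rw [← sum_fiberwise_of_maps_to hg, mul_sum]
  refine sum_le_sum fun b hb => ?_
  calc ∑ a ∈ s with g a = b, f (g a) = #{a ∈ s | g a = b} * f b := by
        rw [sum_congr rfl fun a ha => by rw [(mem_filter.mp ha).2], sum_const, nsmul_eq_mul]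
    _ ≤ N * f b := by gcongr; exacts [hf b hb, hfiber b hb]

/-- If `R ⊆ I × J` is a relation between finite sets in which every `i ∈ I` is
related to at most `N` elements of `J` and every `j ∈ J` to at most `N` elements of `I`, and
`p₁, p₂ ≥ 0` with `p₁ + p₂ = 2`, then
`Σ_{(i,j) ∈ R} |x_i|^{p₁} |y_j|^{p₂} ≤ N (Σ_{i ∈ I} x_i² + Σ_{j ∈ J} y_j²)`. -/
theorem stmt_7 {ι κ : Type*} [DecidableEq ι] [DecidableEq κ]
    (I : Finset ι) (J : Finset κ) (R : Finset (ι × κ)) (hR : R ⊆ I ×ˢ J)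
    (N : ℕ)
    (hrow : ∀ i ∈ I, (R.filter fun q => q.1 = i).card ≤ N)
    (hcol : ∀ j ∈ J, (R.filter fun q => q.2 = j).card ≤ N)
    (p₁ p₂ : ℝ) (hp₁ : 0 ≤ p₁) (hp₂ : 0 ≤ p₂) (hps : p₁ + p₂ = 2)
    (x : ι → ℝ) (y : κ → ℝ) :
    ∑ q ∈ R, |x q.1| ^ p₁ * |y q.2| ^ p₂ ≤
      (N : ℝ) * (∑ i ∈ I, x i ^ 2 + ∑ j ∈ J, y j ^ 2) := by
  have hfst : ∀ q ∈ R, q.1 ∈ I := fun q hq => (mem_product.mp (hR hq)).1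
  have hsnd : ∀ q ∈ R, q.2 ∈ J := fun q hq => (mem_product.mp (hR hq)).2
  calc ∑ q ∈ R, |x q.1| ^ p₁ * |y q.2| ^ p₂
      ≤ ∑ q ∈ R, (x q.1 ^ 2 + y q.2 ^ 2) :=
        sum_le_sum fun q _ => Real.abs_rpow_mul_abs_rpow_le_sq_add_sq hp₁ hp₂ hps _ _
    _ = ∑ q ∈ R, x q.1 ^ 2 + ∑ q ∈ R, y q.2 ^ 2 := sum_add_distrib
    _ ≤ N * ∑ i ∈ I, x i ^ 2 + N * ∑ j ∈ J, y j ^ 2 := by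
        gcongr
        · exact sum_comp_le_mul_sum_of_card_fiber_le hfst hrow fun i _ => sq_nonneg (x i)
        · exact sum_comp_le_mul_sum_of_card_fiber_le hsnd hcol fun j _ => sq_nonneg (y j)
    _ = N * (∑ i ∈ I, x i ^ 2 + ∑ j ∈ J, y j ^ 2) := (mul_add _ _ _).symm
end

section
/- Let p ∈ [1,2), γ = (2p−2)/(2−p), and T > 0. For each natural number n ≥ 1 consider the observation times t_i^{(1)} = i/n and t_j^{(2)} = j/n^{1+γ} (with n^{1+γ} the real power), and the observation intervals I_i^{(1)} = ((i−1)/n, i/n], I_j^{(2)} = ((j−1)/n^{1+γ}, j/n^{1+γ}]. Then there exists a constant C > 0, depending only on p and T, such that for all n ≥ 1: Σ_{i,j≥1 : t_i^{(1)} ∨ t_j^{(2)} ≤ T, I_i^{(1)} ∩ I_j^{(2)} ≠ ∅} ( |I_i^{(1)}| · |I_j^{(2)}| )^{p/2} ≤ C. -/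
open scoped Classical

/-- For `p ∈ [1,2)`, `γ = (2p−2)/(2−p)` and the observation times
`t_i^{(1)} = i/n`, `t_j^{(2)} = j/n^{1+γ}` (indices shifted by one), the sums
`Σ_{i,j : t_i^{(1)} ∨ t_j^{(2)} ≤ T, overlap} (|I_i^{(1)}|·|I_j^{(2)}|)^{p/2}`
are bounded by a constant `C > 0` depending only on `p` and `T`, uniformly in `n ≥ 1`. -/
theorem stmt_10 (p γ T : ℝ) (hp₁ : 1 ≤ p) (hp₂ : p < 2)
    (hγ : γ = (2 * p - 2) / (2 - p)) (hT : 0 < T) :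
    ∃ C : ℝ, 0 < C ∧ ∀ n : ℕ, 1 ≤ n →
      (∑' (i : ℕ) (j : ℕ),
        if max (((i : ℝ) + 1) / n) (((j : ℝ) + 1) / ((n : ℝ) ^ (1 + γ))) ≤ T ∧
            (Set.Ioc ((i : ℝ) / n) (((i : ℝ) + 1) / n) ∩
              Set.Ioc ((j : ℝ) / ((n : ℝ) ^ (1 + γ)))
                (((j : ℝ) + 1) / ((n : ℝ) ^ (1 + γ)))).Nonempty
        then ((((i : ℝ) + 1) / n - (i : ℝ) / n) *
            (((j : ℝ) + 1) / ((n : ℝ) ^ (1 + γ)) - (j : ℝ) / ((n : ℝ) ^ (1 + γ)))) ^ (p / 2)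
        else 0) ≤ C := by
  refine ⟨3 * (T + 1), by positivity, ?_⟩
  intro n hn
  have hp2 : (0:ℝ) < 2 - p := by linarith
  have h2p : (2:ℝ) - p ≠ 0 := ne_of_gt hp2
  have hγ0 : 0 ≤ γ := by
    rw [hγ]
    apply div_nonneg <;> linarith
  set a : ℝ := (n : ℝ) with ha_def
  have ha1 : (1 : ℝ) ≤ a := by rw [ha_def]; exact_mod_cast hn
  have ha0 : (0 : ℝ) < a := lt_of_lt_of_le one_pos ha1
  set A : ℝ := a ^ (1 + γ) with hA_def
  have hA0 : 0 < A := Real.rpow_pos_of_pos ha0 _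
  have hAa : a ≤ A := by
    calc a = a ^ (1:ℝ) := (Real.rpow_one a).symm
    _ ≤ A := Real.rpow_le_rpow_of_exponent_le ha1 (by linarith)
  set c : ℝ := (1 / a * (1 / A)) ^ (p / 2) with hc_def
  have hc0 : 0 ≤ c := Real.rpow_nonneg (by positivity) _
  set K : ℕ := ⌊A / a⌋₊ + 2 with hK_def
  set N : ℕ := ⌈T * a⌉₊ with hN_def
  set f : ℕ → ℕ → ℝ := fun i j =>
    if max (((i : ℝ) + 1) / a) (((j : ℝ) + 1) / A) ≤ T ∧
        (Set.Ioc ((i : ℝ) / a) (((i : ℝ) + 1) / a) ∩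
          Set.Ioc ((j : ℝ) / A) (((j : ℝ) + 1) / A)).Nonempty
    then ((((i : ℝ) + 1) / a - (i : ℝ) / a) * (((j : ℝ) + 1) / A - (j : ℝ) / A)) ^ (p / 2)
    else 0 with hf_def
  -- value of each nonzero term
  have hbase : ∀ i j : ℕ, ((((i : ℝ) + 1) / a - (i : ℝ) / a) *
      (((j : ℝ) + 1) / A - (j : ℝ) / A)) = 1 / a * (1 / A) := by
    intro i j
    field_simp
    ring
  have hfc : ∀ i j : ℕ, f i j ≤ c := by
    intro i j
    simp only [hf_def]
    split
    · rw [hbase]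
    · exact hc0
  -- support in j
  have hsupp : ∀ i : ℕ, ∀ j ∉ Finset.Ico (⌊(i:ℝ) * A / a⌋₊) (⌊(i:ℝ) * A / a⌋₊ + K),
      f i j = 0 := by
    intro i j hj
    simp only [hf_def]
    rw [if_neg]
    rintro ⟨-, x, ⟨hx1, hx2⟩, ⟨hx3, hx4⟩⟩
    apply hj
    set m : ℕ := ⌊(i:ℝ) * A / a⌋₊ with hm_def
    have h1 : (i:ℝ) * A / a < (j:ℝ) + 1 := by
      have hx : (i:ℝ) / a < ((j:ℝ) + 1) / A := lt_of_lt_of_le hx1 hx4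
      rw [div_lt_div_iff₀ ha0 hA0] at hx
      rw [div_lt_iff₀ ha0]
      nlinarith
    have h2 : (j:ℝ) < ((i:ℝ) + 1) * A / a := by
      have : (j:ℝ) / A < ((i:ℝ) + 1) / a := lt_of_lt_of_le hx3 hx2
      rw [div_lt_div_iff₀ hA0 ha0] at this
      rw [lt_div_iff₀ ha0]
      nlinarith
    have hmj : m ≤ j := by
      have hmle : (m:ℝ) ≤ (i:ℝ) * A / a := Nat.floor_le (by positivity)
      have : (m:ℝ) < (j:ℝ) + 1 := lt_of_le_of_lt hmle h1
      exact_mod_cast Nat.lt_add_one_iff.mp (by exact_mod_cast this)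
    have hjm : j < m + K := by
      have hfl1 : (i:ℝ) * A / a < (m:ℝ) + 1 := Nat.lt_floor_add_one _
      have hfl2 : A / a < (⌊A / a⌋₊ : ℝ) + 1 := Nat.lt_floor_add_one _
      have : (j:ℝ) < (m:ℝ) + (⌊A / a⌋₊ : ℝ) + 2 := by
        have : ((i:ℝ) + 1) * A / a = (i:ℝ) * A / a + A / a := by ring
        nlinarith
      have : (j:ℝ) < ((m + K : ℕ) : ℝ) := by
        push_cast [hK_def]
        linarith
      exact_mod_cast this
    exact Finset.mem_Ico.mpr ⟨hmj, hjm⟩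
  -- inner sum bound
  have hg : ∀ i : ℕ, (∑' j, f i j) ≤ (K : ℝ) * c := by
    intro i
    rw [tsum_eq_sum (hsupp i)]
    calc ∑ j ∈ Finset.Ico (⌊(i:ℝ) * A / a⌋₊) (⌊(i:ℝ) * A / a⌋₊ + K), f i j
        ≤ (Finset.Ico (⌊(i:ℝ) * A / a⌋₊) (⌊(i:ℝ) * A / a⌋₊ + K)).card • c :=
          Finset.sum_le_card_nsmul _ _ c (fun j _ => hfc i j)
      _ = (K : ℝ) * c := by rw [Nat.card_Ico]; simp [nsmul_eq_mul]
  -- outer support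
  have houter : ∀ i ∉ Finset.range N, (∑' j, f i j) = 0 := by
    intro i hi
    have hiN : N ≤ i := by simpa using hi
    have hTi : T < ((i:ℝ) + 1) / a := by
      rw [lt_div_iff₀ ha0]
      have h1 : T * a ≤ (N : ℝ) := Nat.le_ceil _
      have h2 : (N : ℝ) ≤ (i : ℝ) := by exact_mod_cast hiN
      linarith
    have : ∀ j, f i j = 0 := by
      intro j
      simp only [hf_def]
      rw [if_neg]
      rintro ⟨hmax, -⟩
      have := le_trans (le_max_left (((i:ℝ)+1)/a) (((j:ℝ)+1)/A)) hmax
      linarith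
    simp only [this, tsum_zero]
  -- exponent computation
  have hAc : A * c = 1 := by
    have hmul : a * A = a ^ ((2:ℝ) + γ) := by
      calc a * A = a ^ (1:ℝ) * a ^ (1 + γ) := by rw [Real.rpow_one, hA_def]
        _ = a ^ ((1:ℝ) + (1 + γ)) := (Real.rpow_add ha0 _ _).symm
        _ = a ^ ((2:ℝ) + γ) := by ring_nf
    have hc' : c = a ^ (-(((2:ℝ) + γ) * (p / 2))) := by
      rw [hc_def, one_div, one_div, ← mul_inv, hmul,
        ← Real.rpow_neg (le_of_lt ha0), ← Real.rpow_mul (le_of_lt ha0)]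
      ring_nf
    rw [hA_def, hc', ← Real.rpow_add ha0]
    rw [show (1 + γ) + -(((2:ℝ) + γ) * (p / 2)) = 0 from by rw [hγ]; field_simp; ring]
    exact Real.rpow_zero a
  -- assemble
  calc (∑' (i : ℕ) (j : ℕ), f i j) = ∑ i ∈ Finset.range N, (∑' j, f i j) :=
        tsum_eq_sum houter
    _ ≤ ∑ i ∈ Finset.range N, (K : ℝ) * c := Finset.sum_le_sum (fun i _ => hg i)
    _ = (N : ℝ) * ((K : ℝ) * c) := by rw [Finset.sum_const, Finset.card_range, nsmul_eq_mul]
    _ ≤ 3 * (T + 1) := by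
        have hN1 : (N : ℝ) ≤ T * a + 1 := by
          have := Nat.ceil_lt_add_one (show (0:ℝ) ≤ T * a by positivity)
          linarith
        have hK1 : (K : ℝ) ≤ 3 * (A / a) := by
          have h1 : (⌊A / a⌋₊ : ℝ) ≤ A / a := Nat.floor_le (by positivity)
          have h2 : (1:ℝ) ≤ A / a := (one_le_div ha0).mpr hAa
          push_cast [hK_def]
          linarith
        have hNa : (N : ℝ) ≤ (T + 1) * a := by nlinarith
        have key : (N : ℝ) * ((K : ℝ) * c) ≤ ((T + 1) * a) * ((3 * (A / a)) * c) := by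
          apply mul_le_mul hNa (mul_le_mul_of_nonneg_right hK1 hc0) (by positivity)
            (by positivity)
        have heq : ((T + 1) * a) * ((3 * (A / a)) * c) = 3 * (T + 1) * (A * c) := by
          field_simp
        rw [heq, hAc, mul_one] at key
        exact key
end

section
/- Let (Ω, F, P) be a probability space, p ∈ (0,2) and γ > p/(2−p). For each natural number n ≥ 1 let (Z_i^n)_{i≥1} be a sequence of random variables that are mutually independent (for fixed n) and each distributed according to the standard normal distribution N(0,1). Set S_n = Σ_{i=1}^{⌈n^γ⌉} ( n^{−(1+γ)/2} |Z_i^n| )^p. Then S_n tends to +∞ in probability, i.e. for every M > 0 one has P( S_n ≤ M ) → 0 as n → ∞. -/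
open MeasureTheory ProbabilityTheory Filter Finset


/-- If for each `n` the random variables `(Z_i^n)_i` are i.i.d. standard normal,
`p ∈ (0,2)` and `γ > p/(2−p)`, then `S_n = Σ_{i=1}^{⌈n^γ⌉} (n^{−(1+γ)/2} |Z_i^n|)^p` tends to
`+∞` in probability: for every `M > 0`, `P(S_n ≤ M) → 0` as `n → ∞`. -/
theorem stmt_11 {Ω : Type*} [MeasurableSpace Ω] (P : MeasureTheory.Measure Ω)
    [MeasureTheory.IsProbabilityMeasure P]
    (p γ : ℝ) (hp0 : 0 < p) (hp2 : p < 2) (hγ : p / (2 - p) < γ)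
    (Z : ℕ → ℕ → Ω → ℝ)
    (hmeas : ∀ n i, Measurable (Z n i))
    (hindep : ∀ n, ProbabilityTheory.iIndepFun (fun i => Z n i) P)
    (hlaw : ∀ n i, MeasureTheory.Measure.map (Z n i) P = ProbabilityTheory.gaussianReal 0 1) :
    ∀ M : ℝ, 0 < M →
      Filter.Tendsto
        (fun n : ℕ => P {ω | (∑ i ∈ Finset.range ⌈(n : ℝ) ^ γ⌉₊,
            ((n : ℝ) ^ (-(1 + γ) / 2) * |Z n i ω|) ^ p) ≤ M})
        Filter.atTop (nhds 0) := by
  intro M hM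
  have h2p : 0 < 2 - p := by linarith
  have hγ0 : 0 < γ := lt_of_le_of_lt (le_of_lt (div_pos hp0 h2p)) hγ
  -- the set and indicator function
  set s : Set ℝ := {x : ℝ | 1 ≤ |x|} with hs_def
  have hs : MeasurableSet s := measurableSet_le measurable_const measurable_abs
  set f : ℝ → ℝ := s.indicator (fun _ => 1) with hf_def
  have hf : Measurable f := measurable_const.indicator hs
  have hf01 : ∀ x, f x ∈ Set.Icc (0:ℝ) 1 := by
    intro x
    rw [hf_def, Set.indicator_apply]
    split <;> simp
  -- q > 0
  set q : ℝ := ((gaussianReal 0 1) s).toReal with hq_def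
  have hIci : Set.Ici (1:ℝ) ⊆ s := fun x hx => le_trans hx (le_abs_self x)
  have hq : 0 < q := by
    rw [hq_def, gaussianReal_apply_eq_integral 0 one_ne_zero s,
      ENNReal.toReal_ofReal (setIntegral_nonneg hs fun x _ => gaussianPDFReal_nonneg 0 1 x)]
    rw [setIntegral_pos_iff_support_of_nonneg_ae
      (Filter.Eventually.of_forall fun x => gaussianPDFReal_nonneg 0 1 x)
      ((integrable_gaussianPDFReal 0 1).restrict)]
    have hsupp : Function.support (gaussianPDFReal 0 1) = Set.univ := by
      ext x
      simp [Function.support, (gaussianPDFReal_pos 0 1 x one_ne_zero).ne']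
    rw [hsupp, Set.univ_inter]
    calc (0:ENNReal) < volume (Set.Ici (1:ℝ)) := by simp [Real.volume_Ici]
      _ ≤ volume s := measure_mono hIci
  -- indicators
  set X : ℕ → ℕ → Ω → ℝ := fun n i => f ∘ Z n i with hX_def
  have hXmeas : ∀ n i, Measurable (X n i) := fun n i => hf.comp (hmeas n i)
  have hXmem : ∀ n i, MemLp (X n i) 2 P := fun n i =>
    memLp_of_bounded (ae_of_all _ fun ω => hf01 _) (hXmeas n i).aestronglyMeasurable 2
  have hXint : ∀ n i, P[X n i] = q := by
    intro n i
    have : P[X n i] = ∫ x, f x ∂(Measure.map (Z n i) P) :=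
      (integral_map (hmeas n i).aemeasurable hf.aestronglyMeasurable).symm
    rw [this, hlaw n i, hf_def, integral_indicator_const (1:ℝ) hs, smul_eq_mul, mul_one]
    rfl
  have hXvar : ∀ n i, variance (X n i) P ≤ 1/4 := by
    intro n i
    have h := variance_le_sq_of_bounded (μ := P) (a := 0) (b := 1) (X := X n i)
      (ae_of_all _ fun ω => hf01 (Z n i ω)) (hXmeas n i).aemeasurable
    refine h.trans ?_
    norm_num
  -- sums
  set m : ℕ → ℕ := fun n => ⌈(n : ℝ) ^ γ⌉₊ with hm_def
  set T : ℕ → Ω → ℝ := fun n => ∑ i ∈ Finset.range (m n), X n i with hT_def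
  have hTmem : ∀ n, MemLp (T n) 2 P := fun n =>
    memLp_finset_sum' _ (fun i _ => hXmem n i)
  have hTint : ∀ n, P[T n] = (m n : ℝ) * q := by
    intro n
    have hTn : T n = ∑ i ∈ Finset.range (m n), X n i := rfl
    rw [hTn]
    simp only [Finset.sum_apply]
    rw [integral_finset_sum _ (fun i _ => (hXmem n i).integrable one_le_two)]
    simp [hXint n]
  have hTvar : ∀ n, variance (T n) P ≤ (m n : ℝ) / 4 := by
    intro n
    have hTn : T n = ∑ i ∈ Finset.range (m n), X n i := rfl
    rw [hTn, IndepFun.variance_sum (fun i _ => hXmem n i)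
      (fun i _ j _ hij => ((hindep n).indepFun hij).comp hf hf)]
    calc ∑ i ∈ Finset.range (m n), variance (X n i) P
        ≤ ∑ _i ∈ Finset.range (m n), (1/4 : ℝ) := Finset.sum_le_sum fun i _ => hXvar n i
      _ = (m n : ℝ) / 4 := by simp; ring
  -- Chebyshev for sufficiently large n
  set δ : ℝ := γ - (1 + γ) * p / 2 with hδ_def
  have hδ : 0 < δ := by
    rw [hδ_def]
    rw [div_lt_iff₀ h2p] at hγ
    nlinarith
  -- eventual bound
  have hev : ∀ᶠ n : ℕ in atTop,
      P {ω | (∑ i ∈ Finset.range (m n),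
          ((n : ℝ) ^ (-(1 + γ) / 2) * |Z n i ω|) ^ p) ≤ M}
        ≤ ENNReal.ofReal (1 / ((n : ℝ) ^ γ * q ^ 2)) := by
    have h1 : ∀ᶠ n : ℕ in atTop, (1:ℝ) ≤ (n:ℝ) :=
      tendsto_natCast_atTop_atTop.eventually_ge_atTop 1
    have h2 : ∀ᶠ n : ℕ in atTop, 2 * M / q < (n:ℝ) ^ δ :=
      ((tendsto_rpow_atTop hδ).comp tendsto_natCast_atTop_atTop).eventually_gt_atTop _
    filter_upwards [h1, h2] with n hn1 hn2
    have hn0 : (0:ℝ) < (n:ℝ) := lt_of_lt_of_le one_pos hn1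
    have hm1 : (1:ℝ) ≤ (m n : ℝ) := by
      have : (1:ℝ) ≤ (n:ℝ) ^ γ := Real.one_le_rpow hn1 hγ0.le
      exact this.trans (Nat.le_ceil _)
    have hmpos : (0:ℝ) < (m n : ℝ) := lt_of_lt_of_le one_pos hm1
    set c : ℝ := (n : ℝ) ^ (-(1 + γ) / 2) with hc_def
    have hc0 : 0 < c := Real.rpow_pos_of_pos hn0 _
    -- key: c^p * m n ≥ n^δ
    have hkey : (n:ℝ) ^ δ ≤ c ^ p * (m n : ℝ) := by
      have h3 : c ^ p = (n:ℝ) ^ (-(1 + γ) / 2 * p) := by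
        rw [hc_def, ← Real.rpow_mul hn0.le]
      have h4 : (n:ℝ) ^ δ = (n:ℝ) ^ (-(1 + γ) / 2 * p) * (n:ℝ) ^ γ := by
        rw [← Real.rpow_add hn0, hδ_def]; ring_nf
      rw [h3, h4]
      exact mul_le_mul_of_nonneg_left (Nat.le_ceil _) (Real.rpow_pos_of_pos hn0 _).le
    -- set inclusion
    have hincl : {ω | (∑ i ∈ Finset.range (m n), (c * |Z n i ω|) ^ p) ≤ M}
        ⊆ {ω | (m n : ℝ) * q / 2 ≤ |T n ω - P[T n]|} := by
      intro ω hω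
      simp only [Set.mem_setOf_eq] at hω ⊢
      have hST : c ^ p * T n ω ≤ ∑ i ∈ Finset.range (m n), (c * |Z n i ω|) ^ p := by
        have hTn : T n ω = ∑ i ∈ Finset.range (m n), X n i ω := Finset.sum_apply ω _ _
        rw [hTn]
        rw [Finset.mul_sum]
        refine Finset.sum_le_sum fun i _ => ?_
        rw [hX_def]
        simp only [Function.comp_apply, hf_def, Set.indicator_apply]
        split
        · rename_i h
          rw [mul_one]
          calc c ^ p = (c * 1) ^ p := by rw [mul_one]
            _ ≤ (c * |Z n i ω|) ^ p :=
              Real.rpow_le_rpow (by positivity)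
                (mul_le_mul_of_nonneg_left h hc0.le) hp0.le
        · rw [mul_zero]
          positivity
      have hTbound : T n ω ≤ (m n : ℝ) * q / 2 := by
        by_contra hcon
        push_neg at hcon
        have : (n:ℝ) ^ δ * (q/2) < c ^ p * T n ω := by
          calc (n:ℝ) ^ δ * (q/2) ≤ c ^ p * (m n : ℝ) * (q/2) :=
              mul_le_mul_of_nonneg_right hkey (by positivity)
            _ = c ^ p * ((m n : ℝ) * q / 2) := by ring
            _ < c ^ p * T n ω := by
              exact mul_lt_mul_of_pos_left hcon (by positivity)
        have hM' : M < (n:ℝ) ^ δ * (q/2) := by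
          rw [div_lt_iff₀ hq] at hn2
          nlinarith
        linarith [hST.trans hω]
      rw [hTint n]
      have : (m n : ℝ) * q / 2 ≤ (m n : ℝ) * q - T n ω := by linarith
      calc (m n : ℝ) * q / 2 ≤ (m n : ℝ) * q - T n ω := this
        _ ≤ |T n ω - (m n : ℝ) * q| := by
          rw [abs_sub_comm]; exact le_abs_self _
    -- apply Chebyshev
    have hcpos : 0 < (m n : ℝ) * q / 2 := by positivity
    calc P {ω | (∑ i ∈ Finset.range (m n), (c * |Z n i ω|) ^ p) ≤ M}
        ≤ P {ω | (m n : ℝ) * q / 2 ≤ |T n ω - P[T n]|} := measure_mono hincl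
      _ ≤ ENNReal.ofReal (variance (T n) P / ((m n : ℝ) * q / 2) ^ 2) :=
          meas_ge_le_variance_div_sq (hTmem n) hcpos
      _ ≤ ENNReal.ofReal (1 / ((n : ℝ) ^ γ * q ^ 2)) := by
          apply ENNReal.ofReal_le_ofReal
          have hvle : variance (T n) P / ((m n : ℝ) * q / 2) ^ 2
              ≤ ((m n : ℝ) / 4) / ((m n : ℝ) * q / 2) ^ 2 :=
            div_le_div_of_nonneg_right (hTvar n) (by positivity)
          refine hvle.trans ?_
          have heq : ((m n : ℝ) / 4) / ((m n : ℝ) * q / 2) ^ 2 = 1 / ((m n : ℝ) * q ^ 2) := by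
            field_simp
            ring
          rw [heq]
          apply one_div_le_one_div_of_le (by positivity)
          have : (n:ℝ) ^ γ ≤ (m n : ℝ) := Nat.le_ceil _
          nlinarith [Real.rpow_pos_of_pos hn0 γ, sq_nonneg q]
  -- squeeze
  have hlim : Tendsto (fun n : ℕ => ENNReal.ofReal (1 / ((n : ℝ) ^ γ * q ^ 2)))
      atTop (nhds 0) := by
    have : Tendsto (fun n : ℕ => 1 / ((n : ℝ) ^ γ * q ^ 2)) atTop (nhds 0) := by
      apply Tendsto.div_atTop tendsto_const_nhds
      exact Tendsto.atTop_mul_const (by positivity)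
        ((tendsto_rpow_atTop hγ0).comp tendsto_natCast_atTop_atTop)
    have h0 : (0 : ENNReal) = ENNReal.ofReal 0 := by simp
    rw [h0]
    exact (ENNReal.continuous_ofReal.tendsto 0).comp this
  exact tendsto_of_tendsto_of_tendsto_of_le_of_le' tendsto_const_nhds hlim
    (Filter.Eventually.of_forall fun n => zero_le) hev
end
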